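/- arXiv:1401.2506 — 8 statements merged into one kernel-verified Lean document; each statement's English description precedes it below -/
import Mathlib

section
/- Let a, b, c, d ∈ ℂ with a·d − b·c ≠ 0, and let Γ ⊆ ℂ be Carleson with some constant C. Then the image Γ' = {(a·z + b)/(c·z + d) : z ∈ Γ, c·z + d ≠ 0} of Γ under the linear fractional transformation ψ(z) = (az+b)/(cz+d) is Carleson with some constant C' (i.e., there exists C' > 0 such that μ(Γ' ∩ D(w,r)) ≤ C'·r for all w ∈ ℂ and r > 0). -/
/-!
If `c = 0`, `ψ` is affine; otherwise `ψ z = a / c + (b * c - a * d) / c * (c * z + d)⁻¹`, so `ψ`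
is a composition of affine maps `z ↦ k * z + t` and the inversion `z ↦ z⁻¹`. An affine map
scales `μH[1]` and radii by the same factor `‖k‖`, so it preserves the Carleson constant.
For the inversion, a disc `ball w r` with `2 * r < ‖w‖` pulls back into `ball w⁻¹ (2 * r / ‖w‖ ^ 2)`,
on which `z ↦ z⁻¹` is `9 ‖w‖ ^ 2 / 4`-Lipschitz. A disc with `‖w‖ ≤ 2 * r` lies in `ball 0 (3 * r)`,
whose preimage is covered by the dyadic shells `2 ^ n / R ≤ ‖z‖ < 2 ^ (n + 1) / R`; the shell `n`
contributes at most `2 * C * R / 2 ^ n`, a geometric series.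
-/

open MeasureTheory Metric Set

def IsCarleson {X : Type*} [MetricSpace X] [MeasurableSpace X] [BorelSpace X] (C : ℝ)
    (S : Set X) : Prop :=
  ∀ (z : X) (r : ℝ), 0 < r → μH[1] (S ∩ ball z r) ≤ ENNReal.ofReal (C * r)

section
variable {𝕜 : Type*} [NormedField 𝕜]

theorem lipschitzWith_mul_add (k t : 𝕜) : LipschitzWith ‖k‖₊ (fun z => k * z + t) :=
  LipschitzWith.of_dist_le_mul fun x y => by simp [dist_eq_norm, ← mul_sub]

theorem preimage_mul_add_ball {k : 𝕜} (hk : k ≠ 0) (t w : 𝕜) (r : ℝ) :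
    (fun z => k * z + t) ⁻¹' ball w r = ball ((w - t) / k) (r / ‖k‖) := by
  ext z
  have hz : z - (w - t) / k = (k * z + t - w) / k := by field_simp; ring
  simp only [mem_preimage, mem_ball, dist_eq_norm, hz, norm_div]
  exact (div_lt_div_iff_of_pos_right (norm_pos_iff.2 hk)).symm

theorem lipschitzOnWith_inv {m : ℝ} (hm : 0 < m) :
    LipschitzOnWith (m ^ 2)⁻¹.toNNReal (Inv.inv : 𝕜 → 𝕜) {z | m ≤ ‖z‖} := by
  refine LipschitzOnWith.of_dist_le_mul fun x (hx : m ≤ ‖x‖) y (hy : m ≤ ‖y‖) => ?_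
  have hx0 : x ≠ 0 := norm_pos_iff.1 (hm.trans_le hx)
  have hy0 : y ≠ 0 := norm_pos_iff.1 (hm.trans_le hy)
  rw [dist_inv_inv₀ hx0 hy0, Real.coe_toNNReal _ (by positivity), div_eq_inv_mul]
  gcongr
  nlinarith

theorem mem_ball_inv_and_le_norm_of_inv_mem_ball {z w : 𝕜} {r : ℝ} (hw : 2 * r < ‖w‖)
    (hz : z⁻¹ ∈ ball w r) : z ∈ ball w⁻¹ (2 * r / ‖w‖ ^ 2) ∧ 2 / (3 * ‖w‖) ≤ ‖z‖ := by
  rw [mem_ball] at hz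
  have hlow : ‖w‖ / 2 < ‖z⁻¹‖ := by
    linarith [norm_le_norm_add_norm_sub z⁻¹ w, dist_eq_norm z⁻¹ w]
  have hup : ‖z⁻¹‖ < 3 / 2 * ‖w‖ := by
    linarith [norm_le_norm_add_norm_sub' z⁻¹ w, dist_eq_norm z⁻¹ w]
  have hw0 : 0 < ‖w‖ := by linarith
  have hz0 : 0 < ‖z⁻¹‖ := by linarith
  constructor
  · have key := dist_inv_inv₀ (norm_pos_iff.1 hz0) (norm_pos_iff.1 hw0)
    rw [inv_inv] at key
    rw [mem_ball, key]
    calc dist z⁻¹ w / (‖z⁻¹‖ * ‖w‖) ≤ dist z⁻¹ w / (‖w‖ ^ 2 / 2) := by gcongr; nlinarith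
      _ < r / (‖w‖ ^ 2 / 2) := by gcongr
      _ = 2 * r / ‖w‖ ^ 2 := by ring
  · rw [← inv_inv z, norm_inv, ← one_div, div_le_div_iff₀ (by positivity) hz0]
    linarith

variable [MeasurableSpace 𝕜] [BorelSpace 𝕜]

theorem IsCarleson.image_mul_add {C : ℝ} {S : Set 𝕜} (h : IsCarleson C S) {k : 𝕜} (hk : k ≠ 0)
    (t : 𝕜) : IsCarleson C ((fun z => k * z + t) '' S) := by
  intro w r hr
  have hk' : 0 < ‖k‖ := norm_pos_iff.2 hk
  calc μH[1] ((fun z => k * z + t) '' S ∩ ball w r)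
      = μH[1] ((fun z => k * z + t) '' (S ∩ ball ((w - t) / k) (r / ‖k‖))) := by
        rw [← preimage_mul_add_ball hk, image_inter_preimage]
    _ ≤ ‖k‖₊ ^ (1 : ℝ) * μH[1] (S ∩ ball ((w - t) / k) (r / ‖k‖)) :=
        (lipschitzWith_mul_add k t).hausdorffMeasure_image_le zero_le_one _
    _ ≤ ENNReal.ofReal ‖k‖ * ENNReal.ofReal (C * (r / ‖k‖)) := by
        rw [ENNReal.rpow_one, ofReal_norm]
        exact mul_le_mul_right (h _ _ (div_pos hr hk')) _
    _ = ENNReal.ofReal (C * r) := by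
        rw [← ENNReal.ofReal_mul hk'.le]
        congr 1
        field_simp

theorem hausdorffMeasure_inv_image_le {m : ℝ} (hm : 0 < m) {s : Set 𝕜}
    (hs : s ⊆ {z | m ≤ ‖z‖}) :
    μH[1] (Inv.inv '' s) ≤ ENNReal.ofReal (m ^ 2)⁻¹ * μH[1] s := by
  simpa [ENNReal.ofReal] using ((lipschitzOnWith_inv hm).mono hs).hausdorffMeasure_image_le
    zero_le_one

theorem IsCarleson.hausdorffMeasure_inv_image_inter_ball_zero_le {C : ℝ} {S : Set 𝕜}
    (h : IsCarleson C S) (hC : 0 ≤ C) {R : ℝ} (hR : 0 < R) :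
    μH[1] (Inv.inv '' (S \ {0}) ∩ ball 0 R) ≤ ENNReal.ofReal (4 * C * R) := by
  set A : ℕ → Set 𝕜 := fun n => S ∩ ball 0 (2 ^ (n + 1) / R) ∩ {z | 2 ^ n / R ≤ ‖z‖}
  have hcover : Inv.inv '' (S \ {0}) ∩ ball 0 R ⊆ ⋃ n, Inv.inv '' A n := by
    rintro _ ⟨⟨z, ⟨hzS, hz_ne⟩, rfl⟩, hz⟩
    have hz0 : 0 < ‖z‖ := norm_pos_iff.2 hz_ne
    rw [mem_ball_zero_iff, norm_inv, inv_lt_comm₀ hz0 hR, inv_eq_one_div, div_lt_iff₀ hR] at hz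
    obtain ⟨n, hn, hn'⟩ := exists_nat_pow_near hz.le one_lt_two
    refine mem_iUnion.2 ⟨n, z, ⟨⟨hzS, ?_⟩, ?_⟩, rfl⟩
    · exact mem_ball_zero_iff.2 ((lt_div_iff₀ hR).2 hn')
    · exact (div_le_iff₀ hR).2 hn
  have hshell (n : ℕ) : μH[1] (Inv.inv '' A n) ≤ ENNReal.ofReal (4 * C * R / 2 / 2 ^ n) :=
    calc μH[1] (Inv.inv '' A n)
        ≤ ENNReal.ofReal ((2 ^ n / R) ^ 2)⁻¹ * μH[1] (S ∩ ball 0 (2 ^ (n + 1) / R)) :=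
          (hausdorffMeasure_inv_image_le (m := 2 ^ n / R) (by positivity) inter_subset_right).trans
            (mul_le_mul_right (measure_mono inter_subset_left) _)
      _ ≤ ENNReal.ofReal ((2 ^ n / R) ^ 2)⁻¹ * ENNReal.ofReal (C * (2 ^ (n + 1) / R)) := by
          gcongr
          exact h _ _ (by positivity)
      _ = ENNReal.ofReal (4 * C * R / 2 / 2 ^ n) := by
          rw [← ENNReal.ofReal_mul (by positivity)]
          congr 1
          field_simp
          ring
  calc μH[1] (Inv.inv '' (S \ {0}) ∩ ball 0 R)
      ≤ ∑' n, μH[1] (Inv.inv '' A n) := (measure_mono hcover).trans (measure_iUnion_le _)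
    _ ≤ ∑' n : ℕ, ENNReal.ofReal (4 * C * R / 2 / 2 ^ n) := ENNReal.tsum_le_tsum hshell
    _ = ENNReal.ofReal (4 * C * R) := by
        rw [← ENNReal.ofReal_tsum_of_nonneg (fun n => by positivity) (summable_geometric_two' _),
          tsum_geometric_two']

theorem IsCarleson.inv_image {C : ℝ} {S : Set 𝕜} (h : IsCarleson C S) (hC : 0 ≤ C) :
    IsCarleson (12 * C) (Inv.inv '' (S \ {0})) := by
  intro w r hr
  rcases le_or_gt ‖w‖ (2 * r) with hw | hw
  · have hball : ball w r ⊆ ball 0 (3 * r) :=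
      ball_subset_ball' (by rw [dist_zero_right]; linarith)
    calc μH[1] (Inv.inv '' (S \ {0}) ∩ ball w r)
        ≤ μH[1] (Inv.inv '' (S \ {0}) ∩ ball 0 (3 * r)) := by gcongr
      _ ≤ ENNReal.ofReal (4 * C * (3 * r)) :=
          h.hausdorffMeasure_inv_image_inter_ball_zero_le hC (by positivity)
      _ = ENNReal.ofReal (12 * C * r) := by ring_nf
  · have hw0 : 0 < ‖w‖ := by linarith
    set m := 2 / (3 * ‖w‖)
    set ρ := 2 * r / ‖w‖ ^ 2
    have hsub :
        Inv.inv '' (S \ {0}) ∩ ball w r ⊆ Inv.inv '' (S ∩ ball w⁻¹ ρ ∩ {z | m ≤ ‖z‖}) := by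
      rintro _ ⟨⟨z, ⟨hzS, -⟩, rfl⟩, hz⟩
      obtain ⟨hzρ, hzm⟩ := mem_ball_inv_and_le_norm_of_inv_mem_ball hw hz
      exact ⟨z, ⟨⟨hzS, hzρ⟩, hzm⟩, rfl⟩
    calc μH[1] (Inv.inv '' (S \ {0}) ∩ ball w r)
        ≤ ENNReal.ofReal (m ^ 2)⁻¹ * μH[1] (S ∩ ball w⁻¹ ρ) :=
          (measure_mono hsub).trans <| (hausdorffMeasure_inv_image_le (by positivity)
            inter_subset_right).trans (mul_le_mul_right (measure_mono inter_subset_left) _)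
      _ ≤ ENNReal.ofReal (m ^ 2)⁻¹ * ENNReal.ofReal (C * ρ) := by
          gcongr
          exact h _ _ (by positivity)
      _ = ENNReal.ofReal (9 / 2 * C * r) := by
          rw [← ENNReal.ofReal_mul (by positivity)]
          congr 1
          simp only [m, ρ]
          field_simp
          ring
      _ ≤ ENNReal.ofReal (12 * C * r) := by
          gcongr
          linarith

end

section

variable {𝕜 : Type*} [Field 𝕜]

def lftImage (a b c d : 𝕜) (Γ : Set 𝕜) : Set 𝕜 :=
  {w | ∃ z ∈ Γ, c * z + d ≠ 0 ∧ w = (a * z + b) / (c * z + d)}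

theorem div_eq_mul_inv_add_div {a b c d z : 𝕜} (hc : c ≠ 0) (hz : c * z + d ≠ 0) :
    (a * z + b) / (c * z + d) = (b * c - a * d) / c * (c * z + d)⁻¹ + a / c := by
  rw [← div_eq_mul_inv, div_div, div_add_div _ _ (mul_ne_zero hc hz) hc,
    div_eq_div_iff hz (mul_ne_zero (mul_ne_zero hc hz) hc)]
  ring

theorem lftImage_zero_eq (a b : 𝕜) {d : 𝕜} (hd : d ≠ 0) (Γ : Set 𝕜) :
    lftImage a b 0 d Γ = (fun z => a / d * z + b / d) '' Γ := by
  have h (z : 𝕜) : (a * z + b) / d = a / d * z + b / d := by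
    rw [add_div, mul_div_right_comm]
  ext w
  simp [lftImage, h, hd, eq_comm]

theorem lftImage_eq_of_ne_zero (a b d : 𝕜) {c : 𝕜} (hc : c ≠ 0) (Γ : Set 𝕜) :
    lftImage a b c d Γ = (fun u => (b * c - a * d) / c * u + a / c) ''
      (Inv.inv '' ((fun z => c * z + d) '' Γ \ {0})) := by
  ext w
  constructor
  · rintro ⟨z, hz, hzd, rfl⟩
    exact ⟨_, ⟨_, ⟨⟨z, hz, rfl⟩, hzd⟩, rfl⟩, (div_eq_mul_inv_add_div hc hzd).symm⟩
  · rintro ⟨_, ⟨_, ⟨⟨z, hz, rfl⟩, hzd⟩, rfl⟩, rfl⟩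
    exact ⟨z, hz, hzd, (div_eq_mul_inv_add_div hc hzd).symm⟩

end

/-- The image of a Carleson set `Γ ⊆ ℂ` under a linear fractional
transformation `ψ(z) = (az+b)/(cz+d)` (with `ad - bc ≠ 0`) is again Carleson,
with some constant `C' > 0`. -/
theorem statement0 (a b c d : ℂ) (habcd : a * d - b * c ≠ 0) (Γ : Set ℂ)
    (C : ℝ) (hC : 0 < C)
    (hCar : ∀ (z : ℂ) (r : ℝ), 0 < r →
      μH[1] (Γ ∩ ball z r) ≤ ENNReal.ofReal (C * r)) :
    ∃ C' : ℝ, 0 < C' ∧ ∀ (w : ℂ) (r : ℝ), 0 < r →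
      μH[1] ({w' : ℂ | ∃ z ∈ Γ, c * z + d ≠ 0 ∧ w' = (a * z + b) / (c * z + d)} ∩ ball w r)
        ≤ ENNReal.ofReal (C' * r) := by
  have hΓ : IsCarleson C Γ := hCar
  rcases eq_or_ne c 0 with rfl | hc
  · have hd : d ≠ 0 := by rintro rfl; simp at habcd
    have ha : a ≠ 0 := by rintro rfl; simp at habcd
    refine ⟨C, hC, ?_⟩
    change IsCarleson C (lftImage a b 0 d Γ)
    rw [lftImage_zero_eq a b hd]
    exact hΓ.image_mul_add (div_ne_zero ha hd) _
  · have hk : (b * c - a * d) / c ≠ 0 :=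
      div_ne_zero (fun h => habcd (by linear_combination -h)) hc
    refine ⟨12 * C, by positivity, ?_⟩
    change IsCarleson (12 * C) (lftImage a b c d Γ)
    rw [lftImage_eq_of_ne_zero a b d hc]
    exact ((hΓ.image_mul_add hc d).inv_image hC.le).image_mul_add hk _
end

section
/- Let Γ ⊆ ℂ \ {0} be Carleson with constant C. Then the image Γ' = {1/z : z ∈ Γ} under the inversion z ↦ 1/z satisfies μ(Γ' ∩ D(0,r)) ≤ 4·C·r for every r > 0. -/
/-!
On the annulus `ρ ≤ ‖z‖ < 2ρ` the inversion `z ↦ z⁻¹` is `ρ⁻²`-Lipschitz, so it maps the part of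
`Γ` lying there (which is inside `ball 0 (2ρ)`) to a set of length at most `ρ⁻² · C · 2ρ = 2C/ρ`.
The preimage of `ball 0 r` under inversion is `{‖z‖ > 1/r}`, covered by the dyadic annuli with
`ρ = 2ᵏ/r`, and the resulting bounds `2⁻ᵏ · 2Cr` sum to `4Cr`.
-/

open MeasureTheory Metric

open scoped NNReal ENNReal

theorem setOf_le_norm_subset_iUnion_ball_diff_ball {E : Type*} [SeminormedAddCommGroup E]
    {R : ℝ} (hR : 0 < R) :
    {z : E | R ≤ ‖z‖} ⊆ ⋃ k : ℕ, ball 0 (2 ^ (k + 1) * R) \ ball 0 (2 ^ k * R) := by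
  intro z hz
  obtain ⟨k, hk, hk'⟩ := exists_nat_pow_near ((one_le_div₀ hR).2 hz) one_lt_two
  refine Set.mem_iUnion.2 ⟨k, ?_, ?_⟩
  · simpa using (div_lt_iff₀ hR).1 hk'
  · simpa [le_div_iff₀ hR] using hk

section

variable {𝕜 : Type*} [NormedDivisionRing 𝕜]

theorem lipschitzOnWith_inv_of_le_nnnorm {s : Set 𝕜} {ρ : ℝ≥0} (hρ : 0 < ρ)
    (hs : ∀ z ∈ s, ρ ≤ ‖z‖₊) : LipschitzOnWith (ρ⁻¹ ^ 2) (fun z : 𝕜 => z⁻¹) s := by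
  refine LipschitzOnWith.of_dist_le_mul fun x hx y hy => ?_
  have hxρ : (ρ : ℝ) ≤ ‖x‖ := hs x hx
  have hyρ : (ρ : ℝ) ≤ ‖y‖ := hs y hy
  have hρ' : (0 : ℝ) < ρ := hρ
  have hx0 : x ≠ 0 := norm_pos_iff.1 (hρ'.trans_le hxρ)
  have hy0 : y ≠ 0 := norm_pos_iff.1 (hρ'.trans_le hyρ)
  have hx : ‖x‖⁻¹ ≤ (ρ : ℝ)⁻¹ := inv_anti₀ hρ' hxρ
  have hy : ‖y‖⁻¹ ≤ (ρ : ℝ)⁻¹ := inv_anti₀ hρ' hyρ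
  calc dist x⁻¹ y⁻¹ = ‖x‖⁻¹ * dist x y * ‖y‖⁻¹ := by
        rw [dist_eq_norm, inv_sub_inv' hx0 hy0, norm_mul, norm_mul, norm_inv, norm_inv,
          norm_sub_rev, dist_eq_norm]
    _ ≤ (ρ : ℝ)⁻¹ * dist x y * (ρ : ℝ)⁻¹ := by gcongr
    _ = ↑(ρ⁻¹ ^ 2) * dist x y := by push_cast; ring

variable [MeasurableSpace 𝕜] [BorelSpace 𝕜] {Γ : Set 𝕜} {C : ℝ}

theorem hausdorffMeasure_inv_image_inter_annulus_le
    (hCar : ∀ r : ℝ, 0 < r → μH[1] (Γ ∩ ball 0 r) ≤ ENNReal.ofReal (C * r))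
    {ρ : ℝ} (hρ : 0 < ρ) :
    μH[1] ((fun z : 𝕜 => z⁻¹) '' (Γ ∩ (ball 0 (2 * ρ) \ ball 0 ρ))) ≤
      ENNReal.ofReal (2 * C / ρ) := by
  have hlip : LipschitzOnWith (ρ.toNNReal⁻¹ ^ 2) (fun z : 𝕜 => z⁻¹)
      (Γ ∩ (ball 0 (2 * ρ) \ ball 0 ρ)) := by
    refine lipschitzOnWith_inv_of_le_nnnorm (Real.toNNReal_pos.2 hρ) fun z ⟨_, _, hz⟩ => ?_
    rw [Real.toNNReal_le_iff_le_coe, coe_nnnorm]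
    simpa using hz
  calc μH[1] ((fun z : 𝕜 => z⁻¹) '' (Γ ∩ (ball 0 (2 * ρ) \ ball 0 ρ)))
      ≤ ↑(ρ.toNNReal⁻¹ ^ 2) ^ (1 : ℝ) * μH[1] (Γ ∩ (ball 0 (2 * ρ) \ ball 0 ρ)) :=
        hlip.hausdorffMeasure_image_le zero_le_one
    _ ≤ ↑(ρ.toNNReal⁻¹ ^ 2) * ENNReal.ofReal (C * (2 * ρ)) := by
        rw [ENNReal.rpow_one]
        gcongr
        exact (measure_mono (Set.inter_subset_inter_right _ Set.sdiff_subset)).trans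
          (hCar _ (by positivity))
    _ = ENNReal.ofReal (2 * C / ρ) := by
        rw [← ENNReal.ofReal_coe_nnreal, ← ENNReal.ofReal_mul (by positivity)]
        congr 1
        push_cast
        rw [Real.coe_toNNReal _ hρ.le]
        field_simp

theorem hausdorffMeasure_inv_image_inter_setOf_le_norm_le
    (hCar : ∀ r : ℝ, 0 < r → μH[1] (Γ ∩ ball 0 r) ≤ ENNReal.ofReal (C * r))
    {R : ℝ} (hR : 0 < R) :
    μH[1] ((fun z : 𝕜 => z⁻¹) '' (Γ ∩ {z | R ≤ ‖z‖})) ≤ ENNReal.ofReal (4 * C / R) := by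
  set A : ℕ → Set 𝕜 := fun k => ball 0 (2 ^ (k + 1) * R) \ ball 0 (2 ^ k * R)
  have hA : ∀ k, μH[1] ((fun z : 𝕜 => z⁻¹) '' (Γ ∩ A k)) ≤
      2⁻¹ ^ k * ENNReal.ofReal (2 * C / R) := by
    intro k
    have h := hausdorffMeasure_inv_image_inter_annulus_le hCar
      (show (0 : ℝ) < 2 ^ k * R by positivity)
    rw [← mul_assoc, ← pow_succ'] at h
    refine h.trans_eq ?_
    rw [mul_comm (2 ^ k : ℝ), ← div_div, div_eq_inv_mul _ (2 ^ k : ℝ),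
      ENNReal.ofReal_mul (by positivity), ENNReal.ofReal_inv_of_pos (by positivity),
      ENNReal.ofReal_pow zero_le_two, ENNReal.ofReal_ofNat, ENNReal.inv_pow]
  calc μH[1] ((fun z : 𝕜 => z⁻¹) '' (Γ ∩ {z | R ≤ ‖z‖}))
      ≤ μH[1] (⋃ k, (fun z : 𝕜 => z⁻¹) '' (Γ ∩ A k)) := by
        rw [← Set.image_iUnion, ← Set.inter_iUnion]
        exact measure_mono (Set.image_mono (Set.inter_subset_inter_right _
          (setOf_le_norm_subset_iUnion_ball_diff_ball hR)))
    _ ≤ ∑' k, μH[1] ((fun z : 𝕜 => z⁻¹) '' (Γ ∩ A k)) := measure_iUnion_le _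
    _ ≤ ∑' k : ℕ, 2⁻¹ ^ k * ENNReal.ofReal (2 * C / R) := ENNReal.tsum_le_tsum hA
    _ = ENNReal.ofReal (4 * C / R) := by
        rw [ENNReal.tsum_mul_right, ENNReal.tsum_geometric_two, ← ENNReal.ofReal_ofNat 2,
          ← ENNReal.ofReal_mul zero_le_two]
        ring_nf

end

/-- If `Γ ⊆ ℂ \ {0}` is Carleson with constant `C`, then its image
under inversion `z ↦ 1/z` satisfies `μ(Γ' ∩ D(0,r)) ≤ 4·C·r` for every `r > 0`. -/
theorem statement2 (Γ : Set ℂ) (hΓ : (0 : ℂ) ∉ Γ) (C : ℝ)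
    (hCar : ∀ (z : ℂ) (r : ℝ), 0 < r →
      μH[1] (Γ ∩ ball z r) ≤ ENNReal.ofReal (C * r)) :
    ∀ r : ℝ, 0 < r →
      μH[1] ((fun z : ℂ => z⁻¹) '' Γ ∩ ball 0 r) ≤ ENNReal.ofReal (4 * C * r) := by
  intro r hr
  have hsub : (fun z : ℂ => z⁻¹) '' Γ ∩ ball 0 r ⊆
      (fun z : ℂ => z⁻¹) '' (Γ ∩ {z | r⁻¹ ≤ ‖z‖}) := by
    rintro _ ⟨⟨z, hz, rfl⟩, hzr⟩
    have hz0 : 0 < ‖z‖ := norm_pos_iff.2 (ne_of_mem_of_not_mem hz hΓ)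
    rw [mem_ball_zero_iff, norm_inv] at hzr
    exact ⟨z, ⟨hz, (inv_lt_of_inv_lt₀ hz0 hzr).le⟩, rfl⟩
  calc μH[1] ((fun z : ℂ => z⁻¹) '' Γ ∩ ball 0 r)
      ≤ μH[1] ((fun z : ℂ => z⁻¹) '' (Γ ∩ {z | r⁻¹ ≤ ‖z‖})) := measure_mono hsub
    _ ≤ ENNReal.ofReal (4 * C / r⁻¹) :=
        hausdorffMeasure_inv_image_inter_setOf_le_norm_le (hCar 0) (inv_pos.2 hr)
    _ = ENNReal.ofReal (4 * C * r) := by rw [div_inv_eq_mul]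
end

section
/- Let Γ ⊆ ℂ be Carleson with constant C and let α > 0. Then there exists a constant K > 0, depending only on C and α, such that for all z, z₀ ∈ ℂ and all r > |z − z₀|/2, one has ∫_{Γ ∩ D(z,r)} |z' − z₀|^α dμ(z') ≤ K · r^{1+α}. -/
open MeasureTheory Metric

/-! On `D(z, r)` the integrand is at most `(3r)^α`, because `|z' - z₀| < r + 2r`; the Carleson
condition bounds `μ(Γ ∩ D(z, r))` by `C r`, so `K = 3^α C` works. -/

section

variable {E : Type*} [SeminormedAddCommGroup E]

lemma norm_sub_lt_three_mul_of_mem_ball {x z z₀ : E} {r : ℝ} (hx : x ∈ ball z r)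
    (hz : ‖z - z₀‖ < 2 * r) : ‖x - z₀‖ < 3 * r :=
  calc ‖x - z₀‖ ≤ ‖x - z‖ + ‖z - z₀‖ := norm_sub_le_norm_sub_add_norm_sub x z z₀
    _ < r + 2 * r := add_lt_add (mem_ball_iff_norm.mp hx) hz
    _ = 3 * r := by ring

lemma setLIntegral_inter_ball_rpow_norm_sub_le [MeasurableSpace E] [OpensMeasurableSpace E]
    (μ : Measure E) (s : Set E) {z z₀ : E} {r α : ℝ} (hα : 0 ≤ α) (hz : ‖z - z₀‖ < 2 * r) :
    ∫⁻ x in s ∩ ball z r, ENNReal.ofReal (‖x - z₀‖ ^ α) ∂μ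
      ≤ ENNReal.ofReal ((3 * r) ^ α) * μ (s ∩ ball z r) := by
  have h_bound : ∀ᵐ x ∂μ.restrict (s ∩ ball z r),
      ENNReal.ofReal (‖x - z₀‖ ^ α) ≤ ENNReal.ofReal ((3 * r) ^ α) := by
    filter_upwards [ae_restrict_of_ae_restrict_of_subset Set.inter_subset_right
      (ae_restrict_mem measurableSet_ball)] with x hx
    exact ENNReal.ofReal_le_ofReal <| Real.rpow_le_rpow (norm_nonneg _)
      (norm_sub_lt_three_mul_of_mem_ball hx hz).le hα
  calc ∫⁻ x in s ∩ ball z r, ENNReal.ofReal (‖x - z₀‖ ^ α) ∂μ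
      ≤ ∫⁻ _ in s ∩ ball z r, ENNReal.ofReal ((3 * r) ^ α) ∂μ := lintegral_mono_ae h_bound
    _ = ENNReal.ofReal ((3 * r) ^ α) * μ (s ∩ ball z r) := setLIntegral_const _ _

end

lemma three_mul_rpow_mul_mul_eq {r : ℝ} (hr : 0 < r) (C α : ℝ) :
    (3 * r) ^ α * (C * r) = C * 3 ^ α * r ^ (1 + α) := by
  rw [Real.mul_rpow (by norm_num) hr.le, Real.rpow_add hr, Real.rpow_one]
  ring

/-- If `Γ` is Carleson with constant `C` and `α > 0`, there is a
constant `K > 0` depending only on `C` and `α` such that for all `z, z₀` and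
`r > |z - z₀|/2`, `∫_{Γ ∩ D(z,r)} |z' - z₀|^α dμ(z') ≤ K·r^{1+α}`. -/
theorem statement7 (C α : ℝ) (hC : 0 < C) (hα : 0 < α) :
    ∃ K : ℝ, 0 < K ∧ ∀ Γ : Set ℂ,
      (∀ (z : ℂ) (r : ℝ), 0 < r → μH[1] (Γ ∩ ball z r) ≤ ENNReal.ofReal (C * r)) →
      ∀ z z₀ : ℂ, ∀ r : ℝ, ‖z - z₀‖ / 2 < r →
        ∫⁻ z' in Γ ∩ ball z r,
            ENNReal.ofReal (‖z' - z₀‖ ^ α) ∂(μH[1] : Measure ℂ)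
          ≤ ENNReal.ofReal (K * r ^ (1 + α)) := by
  refine ⟨C * 3 ^ α, by positivity, fun Γ hΓ z z₀ r hr => ?_⟩
  have hr₀ : 0 < r := (by positivity : 0 ≤ ‖z - z₀‖ / 2).trans_lt hr
  calc ∫⁻ z' in Γ ∩ ball z r, ENNReal.ofReal (‖z' - z₀‖ ^ α) ∂(μH[1] : Measure ℂ)
      ≤ ENNReal.ofReal ((3 * r) ^ α) * μH[1] (Γ ∩ ball z r) :=
        setLIntegral_inter_ball_rpow_norm_sub_le _ Γ hα.le (by linarith)
    _ ≤ ENNReal.ofReal ((3 * r) ^ α) * ENNReal.ofReal (C * r) := by gcongr; exact hΓ z r hr₀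
    _ = ENNReal.ofReal (C * 3 ^ α * r ^ (1 + α)) := by
        rw [← ENNReal.ofReal_mul (by positivity), three_mul_rpow_mul_mul_eq hr₀]
end

section
/- Let Γ ⊆ ℂ be Carleson with constant C and let 0 < α < 1. Then there exists a constant K > 0, depending only on C and α, such that for all z, z₀ ∈ ℂ and all r > |z − z₀|/2, one has ∫_{Γ ∩ D(z,r)} |z' − z₀|^{−α} dμ(z') ≤ K · r^{1−α}. -/
/-!
Cut the ball `B(x₀, b)` into the dyadic annuli `b / 2 ^ (n + 1) ≤ |x - x₀| < b / 2 ^ n`. On the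
`n`-th annulus the integrand is at most `(b / 2 ^ (n + 1)) ^ (-α)` and the Carleson bound gives
measure at most `C b / 2 ^ n`, so the `n`-th piece is `C 2 ^ α b ^ (1 - α) (2 ^ (α - 1)) ^ n`:
a convergent geometric series because `α < 1`. The centre lies in arbitrarily small balls, so it is
null. Finally `D(z, r) ⊆ D(z₀, 3r)` when `|z - z₀| < 2r`.
-/

open MeasureTheory Metric

theorem exists_div_two_pow_succ_le_lt {d b : ℝ} (hd : 0 < d) (hdb : d < b) :
    ∃ n : ℕ, b / 2 ^ (n + 1) ≤ d ∧ d < b / 2 ^ n := by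
  classical
  have hex : ∃ n : ℕ, b / 2 ^ n ≤ d := by
    obtain ⟨n, hn⟩ := pow_unbounded_of_one_lt (b / d) one_lt_two
    exact ⟨n, (div_le_iff₀ (by positivity)).2 (by rw [div_lt_iff₀ hd] at hn; linarith)⟩
  have hpos : Nat.find hex ≠ 0 := by
    intro h
    have hbd := Nat.find_spec hex
    rw [h, pow_zero, div_one] at hbd
    linarith
  refine ⟨Nat.find hex - 1, ?_, ?_⟩
  · rw [Nat.sub_add_cancel (Nat.one_le_iff_ne_zero.2 hpos)]
    exact Nat.find_spec hex
  · exact not_le.1 (Nat.find_min hex (Nat.sub_one_lt hpos))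

section Dyadic

variable {X : Type*} [PseudoMetricSpace X]

def dyadicAnnulus (x₀ : X) (b : ℝ) (n : ℕ) : Set X :=
  ball x₀ (b / 2 ^ n) \ ball x₀ (b / 2 ^ (n + 1))

theorem ball_subset_closedBall_zero_union_iUnion_dyadicAnnulus (x₀ : X) (b : ℝ) :
    ball x₀ b ⊆ closedBall x₀ 0 ∪ ⋃ n, dyadicAnnulus x₀ b n := by
  intro x hx
  rcases (dist_nonneg : 0 ≤ dist x x₀).eq_or_lt with h | h
  · exact Or.inl (mem_closedBall.2 h.ge)
  · obtain ⟨n, hle, hlt⟩ := exists_div_two_pow_succ_le_lt h (mem_ball.1 hx)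
    exact Or.inr (Set.mem_iUnion.2 ⟨n, mem_ball.2 hlt, fun h' => (mem_ball.1 h').not_ge hle⟩)

variable [MeasurableSpace X] {ν : Measure X} {x₀ : X} {C : ℝ}

theorem measure_closedBall_zero_eq_zero
    (hν : ∀ s, 0 < s → ν (ball x₀ s) ≤ ENNReal.ofReal (C * s)) : ν (closedBall x₀ 0) = 0 := by
  have hcont : Continuous fun s : ℝ => ENNReal.ofReal (C * s) :=
    ENNReal.continuous_ofReal.comp (continuous_const_mul C)
  have hlim : Filter.Tendsto (fun s => ENNReal.ofReal (C * s)) (nhdsWithin 0 (Set.Ioi 0))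
      (nhds 0) := by
    simpa using (hcont.tendsto 0).mono_left nhdsWithin_le_nhds
  refine nonpos_iff_eq_zero.1 (ge_of_tendsto hlim ?_)
  filter_upwards [self_mem_nhdsWithin] with s hs
  exact (measure_mono (closedBall_subset_ball hs)).trans (hν s hs)

theorem setLIntegral_rpow_neg_dist_dyadicAnnulus_le [OpensMeasurableSpace X] {α b : ℝ}
    (hα : 0 ≤ α) (hb : 0 < b) (hν : ∀ s, 0 < s → ν (ball x₀ s) ≤ ENNReal.ofReal (C * s))
    (n : ℕ) :
    ∫⁻ x in dyadicAnnulus x₀ b n, ENNReal.ofReal (dist x x₀ ^ (-α)) ∂ν ≤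
      ENNReal.ofReal ((b / 2 ^ (n + 1)) ^ (-α) * (C * (b / 2 ^ n))) := by
  calc ∫⁻ x in dyadicAnnulus x₀ b n, ENNReal.ofReal (dist x x₀ ^ (-α)) ∂ν
      ≤ ∫⁻ _ in dyadicAnnulus x₀ b n, ENNReal.ofReal ((b / 2 ^ (n + 1)) ^ (-α)) ∂ν := by
        refine setLIntegral_mono' (measurableSet_ball.diff measurableSet_ball) fun x hx => ?_
        exact ENNReal.ofReal_le_ofReal <| Real.rpow_le_rpow_of_nonpos (by positivity)
          (not_lt.1 fun h => hx.2 (mem_ball.2 h)) (neg_nonpos.2 hα)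
    _ = ENNReal.ofReal ((b / 2 ^ (n + 1)) ^ (-α)) * ν (dyadicAnnulus x₀ b n) :=
        setLIntegral_const _ _
    _ ≤ ENNReal.ofReal ((b / 2 ^ (n + 1)) ^ (-α)) * ENNReal.ofReal (C * (b / 2 ^ n)) :=
        mul_le_mul_right ((measure_mono Set.sdiff_subset).trans (hν _ (by positivity))) _
    _ = ENNReal.ofReal ((b / 2 ^ (n + 1)) ^ (-α) * (C * (b / 2 ^ n))) :=
        (ENNReal.ofReal_mul (by positivity)).symm

end Dyadic

theorem div_two_pow_succ_rpow_neg_mul_div_two_pow {b : ℝ} (hb : 0 < b) (α : ℝ) (n : ℕ) :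
    (b / 2 ^ (n + 1)) ^ (-α) * (b / 2 ^ n) = 2 ^ α * b ^ (1 - α) * ((2 : ℝ) ^ (α - 1)) ^ n := by
  have hx : 0 < b / 2 ^ n := by positivity
  have h2 : (2 : ℝ) ^ (α - 1) = ((2 : ℝ) ^ (1 - α))⁻¹ := by
    rw [← Real.rpow_neg zero_le_two, neg_sub]
  calc (b / 2 ^ (n + 1)) ^ (-α) * (b / 2 ^ n)
      = 2 ^ α * ((b / 2 ^ n) ^ (-α) * (b / 2 ^ n) ^ (1 : ℝ)) := by
        rw [pow_succ, ← div_div, Real.div_rpow hx.le zero_le_two, Real.rpow_neg zero_le_two,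
          Real.rpow_one]
        field_simp
    _ = 2 ^ α * (b ^ (1 - α) / (2 ^ n) ^ (1 - α)) := by
        rw [← Real.rpow_add hx, neg_add_eq_sub, Real.div_rpow hb.le (by positivity)]
    _ = 2 ^ α * b ^ (1 - α) * ((2 : ℝ) ^ (α - 1)) ^ n := by
        rw [← Real.rpow_pow_comm zero_le_two, h2, inv_pow]
        ring

theorem tsum_ofReal_div_two_pow_succ_rpow_neg_mul {C α b : ℝ} (hC : 0 ≤ C) (hα₁ : α < 1) (hb : 0 < b) :
    ∑' n : ℕ, ENNReal.ofReal ((b / 2 ^ (n + 1)) ^ (-α) * (C * (b / 2 ^ n))) =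
      ENNReal.ofReal (C * 2 ^ α / (1 - 2 ^ (α - 1)) * b ^ (1 - α)) := by
  have hq : (2 : ℝ) ^ (α - 1) < 1 := Real.rpow_lt_one_of_one_lt_of_neg one_lt_two (by linarith)
  have hterm : ∀ n : ℕ, (b / 2 ^ (n + 1)) ^ (-α) * (C * (b / 2 ^ n)) =
      C * 2 ^ α * b ^ (1 - α) * ((2 : ℝ) ^ (α - 1)) ^ n := fun n => by
    rw [mul_left_comm, div_two_pow_succ_rpow_neg_mul_div_two_pow hb]; ring
  have hsum := ((hasSum_geometric_of_lt_one (by positivity) hq).mul_left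
    (C * 2 ^ α * b ^ (1 - α)))
  simp only [← hterm] at hsum
  rw [← ENNReal.ofReal_tsum_of_nonneg (fun n => by positivity) hsum.summable, hsum.tsum_eq]
  congr 1
  ring

theorem lintegral_rpow_neg_dist_ball_le {X : Type*} [PseudoMetricSpace X] [MeasurableSpace X]
    [OpensMeasurableSpace X] {ν : Measure X} {x₀ : X} {C α b : ℝ} (hC : 0 ≤ C) (hα₀ : 0 ≤ α)
    (hα₁ : α < 1) (hb : 0 < b) (hν : ∀ s, 0 < s → ν (ball x₀ s) ≤ ENNReal.ofReal (C * s)) :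
    ∫⁻ x in ball x₀ b, ENNReal.ofReal (dist x x₀ ^ (-α)) ∂ν ≤
      ENNReal.ofReal (C * 2 ^ α / (1 - 2 ^ (α - 1)) * b ^ (1 - α)) := by
  set f : X → ENNReal := fun x => ENNReal.ofReal (dist x x₀ ^ (-α))
  calc ∫⁻ x in ball x₀ b, f x ∂ν
      ≤ ∫⁻ x in closedBall x₀ 0 ∪ ⋃ n, dyadicAnnulus x₀ b n, f x ∂ν :=
        lintegral_mono_set (ball_subset_closedBall_zero_union_iUnion_dyadicAnnulus x₀ b)
    _ ≤ ∫⁻ x in closedBall x₀ 0, f x ∂ν + ∫⁻ x in ⋃ n, dyadicAnnulus x₀ b n, f x ∂ν :=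
        lintegral_union_le _ _ _
    _ ≤ 0 + ∑' n, ∫⁻ x in dyadicAnnulus x₀ b n, f x ∂ν := by
        rw [setLIntegral_measure_zero _ _ (measure_closedBall_zero_eq_zero hν)]
        exact add_le_add_right (lintegral_iUnion_le _ _) _
    _ ≤ ∑' n : ℕ, ENNReal.ofReal ((b / 2 ^ (n + 1)) ^ (-α) * (C * (b / 2 ^ n))) := by
        rw [zero_add]
        exact ENNReal.tsum_le_tsum (setLIntegral_rpow_neg_dist_dyadicAnnulus_le hα₀ hb hν)
    _ = ENNReal.ofReal (C * 2 ^ α / (1 - 2 ^ (α - 1)) * b ^ (1 - α)) := tsum_ofReal_div_two_pow_succ_rpow_neg_mul hC hα₁ hb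

/-- If `Γ` is Carleson with constant `C` and `0 < α < 1`, there is
a constant `K > 0` depending only on `C` and `α` such that for all `z, z₀` and
`r > |z - z₀|/2`, `∫_{Γ ∩ D(z,r)} |z' - z₀|^{-α} dμ(z') ≤ K·r^{1-α}`. -/
theorem statement8 (C α : ℝ) (hC : 0 < C) (hα₀ : 0 < α) (hα₁ : α < 1) :
    ∃ K : ℝ, 0 < K ∧ ∀ Γ : Set ℂ,
      (∀ (z : ℂ) (r : ℝ), 0 < r → μH[1] (Γ ∩ ball z r) ≤ ENNReal.ofReal (C * r)) →
      ∀ z z₀ : ℂ, ∀ r : ℝ, ‖z - z₀‖ / 2 < r →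
        ∫⁻ z' in Γ ∩ ball z r,
            ENNReal.ofReal (‖z' - z₀‖ ^ (-α)) ∂(μH[1] : Measure ℂ)
          ≤ ENNReal.ofReal (K * r ^ (1 - α)) := by
  have hq : (2 : ℝ) ^ (α - 1) < 1 := Real.rpow_lt_one_of_one_lt_of_neg one_lt_two (by linarith)
  refine ⟨C * 2 ^ α / (1 - 2 ^ (α - 1)) * 3 ^ (1 - α),
    mul_pos (div_pos (by positivity) (by linarith)) (by positivity), ?_⟩
  intro Γ hΓ z z₀ r hr
  have hr₀ : 0 < r := lt_of_le_of_lt (by positivity) hr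
  have hsub : ball z r ⊆ ball z₀ (3 * r) :=
    ball_subset_ball' (by rw [dist_eq_norm]; linarith)
  have hν : ∀ s, 0 < s → μH[1].restrict Γ (ball z₀ s) ≤ ENNReal.ofReal (C * s) := fun s hs => by
    rw [Measure.restrict_apply measurableSet_ball, Set.inter_comm]
    exact hΓ z₀ s hs
  calc ∫⁻ z' in Γ ∩ ball z r, ENNReal.ofReal (‖z' - z₀‖ ^ (-α)) ∂μH[1]
      = ∫⁻ z' in ball z r, ENNReal.ofReal (dist z' z₀ ^ (-α)) ∂μH[1].restrict Γ := by
        simp only [Measure.restrict_restrict measurableSet_ball, Set.inter_comm, dist_eq_norm]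
    _ ≤ ∫⁻ z' in ball z₀ (3 * r), ENNReal.ofReal (dist z' z₀ ^ (-α)) ∂μH[1].restrict Γ :=
        lintegral_mono_set hsub
    _ ≤ ENNReal.ofReal (C * 2 ^ α / (1 - 2 ^ (α - 1)) * (3 * r) ^ (1 - α)) :=
        lintegral_rpow_neg_dist_ball_le hC.le hα₀.le hα₁ (by positivity) hν
    _ = ENNReal.ofReal (C * 2 ^ α / (1 - 2 ^ (α - 1)) * 3 ^ (1 - α) * r ^ (1 - α)) := by
        rw [Real.mul_rpow zero_le_three hr₀.le, mul_assoc]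
end

section
/- Let 1 < p < ∞, let Γ ⊆ ℂ be Carleson with constant C, and let z ∈ ℂ with dist(z, Γ) > 0. Let h : ℂ → ℂ be measurable with ∫_Γ |z' − z|^{p−2} |h(z')|^p dμ(z') < ∞. Then ∫_Γ |h(z')| / |z' − z| dμ(z') < ∞; that is, the Cauchy integral of h over Γ converges absolutely at z. -/
open MeasureTheory Metric

/-!
With `r = |z' - z|` and `t = |h z'|`, the pointwise bound `t / r ≤ r ^ (p - 2) * t ^ p + r ^ (-2)`
(which is `s ≤ s ^ p + 1` for `s = r t`, rescaled by `r ^ (-2)`) reduces the claim to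
`∫_Γ |z' - z| ^ (-2) < ∞`. Since `Γ` stays at distance `d > 0` from `z`, this integral splits
over the dyadic annuli `2 ^ k d ≤ |z' - z| < 2 ^ (k + 1) d`; by the Carleson bound the `k`-th
annulus contributes at most `2 C (2 ^ k d) ^ (-1)`, a geometric series.
-/

lemma div_le_rpow_mul_rpow_add_rpow_neg_two {p r t : ℝ} (hp : 1 ≤ p) (hr : 0 ≤ r) (ht : 0 ≤ t) :
    t / r ≤ r ^ (p - 2) * t ^ p + r ^ (-2 : ℝ) := by
  rcases hr.eq_or_lt with rfl | hr
  · rw [div_zero]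
    positivity
  have hs : r * t ≤ (r * t) ^ p + 1 := by
    rcases le_total (r * t) 1 with hle | hge
    · linarith [Real.rpow_nonneg (mul_nonneg hr.le ht) p]
    · linarith [Real.self_le_rpow_of_one_le hge hp]
  calc t / r = r ^ (-2 : ℝ) * (r * t) := by
        rw [Real.rpow_neg hr.le, Real.rpow_two]
        field_simp
    _ ≤ r ^ (-2 : ℝ) * ((r * t) ^ p + 1) := by gcongr
    _ = r ^ (p - 2) * t ^ p + r ^ (-2 : ℝ) := by
        rw [Real.mul_rpow hr.le ht, mul_add, mul_one, ← mul_assoc, ← Real.rpow_add hr,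
          neg_add_eq_sub]

lemma exists_two_pow_mul_le_lt {d ρ : ℝ} (hd : 0 < d) (hρ : d ≤ ρ) :
    ∃ k : ℕ, 2 ^ k * d ≤ ρ ∧ ρ < 2 ^ (k + 1) * d := by
  obtain ⟨k, hk⟩ := exists_nat_pow_near ((one_le_div hd).2 hρ) one_lt_two
  exact ⟨k, (le_div_iff₀ hd).1 hk.1, (div_lt_iff₀ hd).1 hk.2⟩

section Annuli

variable {X : Type*} [PseudoMetricSpace X] [MeasurableSpace X] {μ : Measure X} {s : Set X}
  {x : X} {C : ℝ}

lemma setLIntegral_dist_rpow_neg_annulus_le {α r : ℝ} (hα : 0 ≤ α) (hr : 0 < r)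
    (hgrowth : μ (s ∩ ball x (2 * r)) ≤ ENNReal.ofReal (C * (2 * r))) :
    ∫⁻ y in s ∩ (ball x (2 * r) \ ball x r), ENNReal.ofReal (dist y x ^ (-α)) ∂μ ≤
      ENNReal.ofReal C * ENNReal.ofReal (2 * r ^ (1 - α)) := by
  have hbound : ∀ y ∈ s ∩ (ball x (2 * r) \ ball x r),
      ENNReal.ofReal (dist y x ^ (-α)) ≤ ENNReal.ofReal (r ^ (-α)) := by
    rintro y ⟨-, -, hy⟩
    rw [mem_ball, not_lt] at hy
    exact ENNReal.ofReal_le_ofReal (Real.rpow_le_rpow_of_nonpos hr hy (neg_nonpos.2 hα))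
  have hpow : r ^ (-α) * (2 * r) = 2 * r ^ (1 - α) := by
    rw [mul_left_comm, ← Real.rpow_add_one hr.ne', neg_add_eq_sub]
  calc ∫⁻ y in s ∩ (ball x (2 * r) \ ball x r), ENNReal.ofReal (dist y x ^ (-α)) ∂μ
      ≤ ∫⁻ _ in s ∩ (ball x (2 * r) \ ball x r), ENNReal.ofReal (r ^ (-α)) ∂μ :=
        setLIntegral_mono measurable_const hbound
    _ = ENNReal.ofReal (r ^ (-α)) * μ (s ∩ (ball x (2 * r) \ ball x r)) := setLIntegral_const _ _
    _ ≤ ENNReal.ofReal (r ^ (-α)) * (ENNReal.ofReal C * ENNReal.ofReal (2 * r)) := by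
        rw [← ENNReal.ofReal_mul' (by positivity)]
        gcongr
        exact (measure_mono (Set.inter_subset_inter_right _ Set.sdiff_subset)).trans hgrowth
    _ = ENNReal.ofReal C * ENNReal.ofReal (2 * r ^ (1 - α)) := by
        rw [mul_left_comm, ← ENNReal.ofReal_mul (by positivity), hpow]

theorem setLIntegral_dist_rpow_neg_lt_top {α : ℝ} (hα : 1 < α)
    (hgrowth : ∀ r, 0 < r → μ (s ∩ ball x r) ≤ ENNReal.ofReal (C * r))
    (hx : 0 < infDist x s) :
    ∫⁻ y in s, ENNReal.ofReal (dist y x ^ (-α)) ∂μ < ⊤ := by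
  set d := infDist x s
  let annulus (k : ℕ) : Set X := s ∩ (ball x (2 * (2 ^ k * d)) \ ball x (2 ^ k * d))
  have hcover : s ⊆ ⋃ k, annulus k := fun y hy ↦ by
    have hdy : d ≤ dist y x := dist_comm x y ▸ infDist_le_dist_of_mem hy
    obtain ⟨k, hk, hk'⟩ := exists_two_pow_mul_le_lt hx hdy
    exact Set.mem_iUnion.2 ⟨k, hy, by rwa [mem_ball, ← mul_assoc, ← pow_succ'], not_lt.2 hk⟩
  set q : ℝ := 2 ^ (1 - α)
  have hq : q < 1 := Real.rpow_lt_one_of_one_lt_of_neg one_lt_two (by linarith)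
  have hterm (k : ℕ) : 2 * (2 ^ k * d) ^ (1 - α) = 2 * d ^ (1 - α) * q ^ k := by
    rw [Real.mul_rpow (by positivity) hx.le, ← Real.rpow_pow_comm zero_le_two]
    ring
  have hsum : Summable fun k : ℕ ↦ 2 * d ^ (1 - α) * q ^ k :=
    (summable_geometric_of_lt_one (by positivity) hq).mul_left _
  calc ∫⁻ y in s, ENNReal.ofReal (dist y x ^ (-α)) ∂μ
      ≤ ∑' k, ∫⁻ y in annulus k, ENNReal.ofReal (dist y x ^ (-α)) ∂μ :=
        (lintegral_mono_set hcover).trans (lintegral_iUnion_le _ _)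
    _ ≤ ∑' k : ℕ, ENNReal.ofReal C * ENNReal.ofReal (2 * d ^ (1 - α) * q ^ k) :=
        ENNReal.tsum_le_tsum fun k ↦ hterm k ▸ setLIntegral_dist_rpow_neg_annulus_le
          (by linarith) (by positivity) (hgrowth _ (by positivity))
    _ = ENNReal.ofReal C * ENNReal.ofReal (∑' k : ℕ, 2 * d ^ (1 - α) * q ^ k) := by
        rw [ENNReal.tsum_mul_left, ENNReal.ofReal_tsum_of_nonneg (fun _ ↦ by positivity) hsum]
    _ < ⊤ := ENNReal.mul_lt_top ENNReal.ofReal_lt_top ENNReal.ofReal_lt_top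

end Annuli

theorem statement12_general (p : ℝ) (hp : 1 < p)
    (Γ : Set ℂ) (C : ℝ)
    (hCar : ∀ (z : ℂ) (r : ℝ), 0 < r →
      μH[1] (Γ ∩ ball z r) ≤ ENNReal.ofReal (C * r))
    (z : ℂ) (hz : 0 < Metric.infDist z Γ)
    (h : ℂ → ℂ)
    (hLp : ∫⁻ z' in Γ,
        ENNReal.ofReal (‖z' - z‖ ^ (p - 2) * ‖h z'‖ ^ p)
          ∂(μH[1] : Measure ℂ) < ⊤) :
    ∫⁻ z' in Γ,
        ENNReal.ofReal (‖h z'‖ / ‖z' - z‖)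
          ∂(μH[1] : Measure ℂ) < ⊤ := by
  have hpointwise (z' : ℂ) : ENNReal.ofReal (‖h z'‖ / ‖z' - z‖) ≤
      ENNReal.ofReal (‖z' - z‖ ^ (p - 2) * ‖h z'‖ ^ p) +
        ENNReal.ofReal (‖z' - z‖ ^ (-2 : ℝ)) := by
    rw [← ENNReal.ofReal_add (by positivity) (by positivity)]
    exact ENNReal.ofReal_le_ofReal
      (div_le_rpow_mul_rpow_add_rpow_neg_two hp.le (norm_nonneg _) (norm_nonneg _))
  have hweight : ∫⁻ z' in Γ, ENNReal.ofReal (‖z' - z‖ ^ (-2 : ℝ)) ∂(μH[1] : Measure ℂ) < ⊤ := by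
    simpa only [dist_eq_norm] using setLIntegral_dist_rpow_neg_lt_top one_lt_two (hCar z) hz
  calc ∫⁻ z' in Γ, ENNReal.ofReal (‖h z'‖ / ‖z' - z‖) ∂(μH[1] : Measure ℂ)
      ≤ ∫⁻ z' in Γ, (ENNReal.ofReal (‖z' - z‖ ^ (p - 2) * ‖h z'‖ ^ p) +
          ENNReal.ofReal (‖z' - z‖ ^ (-2 : ℝ))) ∂(μH[1] : Measure ℂ) := lintegral_mono hpointwise
    _ = _ := lintegral_add_right _ (by fun_prop)
    _ < ⊤ := ENNReal.add_lt_top.2 ⟨hLp, hweight⟩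

/-- Let `1 < p < ∞`, let `Γ ⊆ ℂ` be Carleson with constant `C`,
and `z ∈ ℂ` with `dist(z, Γ) > 0`. If `h` is measurable and
`∫_Γ |z' - z|^{p-2}|h(z')|^p dμ < ∞`, then `∫_Γ |h(z')|/|z' - z| dμ < ∞`,
i.e. the Cauchy integral of `h` over `Γ` converges absolutely at `z`. -/
theorem statement12 (p : ℝ) (hp : 1 < p)
    (Γ : Set ℂ) (C : ℝ) (hC : 0 < C)
    (hCar : ∀ (z : ℂ) (r : ℝ), 0 < r →
      μH[1] (Γ ∩ ball z r) ≤ ENNReal.ofReal (C * r))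
    (z : ℂ) (hz : 0 < Metric.infDist z Γ)
    (h : ℂ → ℂ) (hmeas : Measurable h)
    (hLp : ∫⁻ z' in Γ,
        ENNReal.ofReal (‖z' - z‖ ^ (p - 2) * ‖h z'‖ ^ p)
          ∂(μH[1] : Measure ℂ) < ⊤) :
    ∫⁻ z' in Γ,
        ENNReal.ofReal (‖h z'‖ / ‖z' - z‖)
          ∂(μH[1] : Measure ℂ) < ⊤ :=
  statement12_general p hp Γ C hCar z hz h hLp
end

section
/- Let p, q, r ∈ [1, ∞) satisfy 1/p + 1/q = 1/r. Let Γ ⊆ ℂ be Carleson with constant C and let z₀ ∈ ℂ with dist(z₀, Γ) > 0. Let f, g : ℂ → ℂ be measurable with ∫_Γ |z − z₀|^{p−2} |f(z)|^p dμ(z) < ∞ and ∫_Γ |z − z₀|^{q−2} |g(z)|^q dμ(z) < ∞. Then both ∫_Γ |z − z₀|^{r−2} |z·f(z)·g(z)|^r dμ(z) < ∞ and ∫_Γ |z − z₀|^{r−2} |f(z)·g(z)|^r dμ(z) < ∞. That is, if f ∈ L̇^p(Γ) and g ∈ L̇^q(Γ), then the functions z·f(z)·g(z) and f·g belong to L̇^r(Γ).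 -/
/-!
Write `|h|_s(z) = |z - z₀|^{1 - 2/s} |h(z)|` (`weightedNorm z₀ s h z`), so that `h ∈ L̇^s(Γ)` means
`|h|_s ∈ L^s(Γ)`. Since `1/p + 1/q = 1/r`, the exponents add up as
`|z - z₀|^{1 - 2/r} · |z - z₀| = |z - z₀|^{1 - 2/p} · |z - z₀|^{1 - 2/q}`, hence
`|m f g|_r = (|m(z)| / |z - z₀|) |f|_p |g|_q`. On `Γ` we have `|z - z₀| ≥ d := dist(z₀, Γ) > 0`, so
the factor `|m(z)| / |z - z₀|` is bounded both for `m(z) = z` (by `1 + |z₀|/d`) and for `m = 1`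
(by `1/d`), and Hölder's inequality puts `|f|_p |g|_q` in `L^r`.
-/

open MeasureTheory Metric

open scoped ENNReal

section Holder

variable {α : Type*} [MeasurableSpace α] {μ : Measure α} {p q r : ℝ} {F G H : α → ℝ≥0∞}

theorem lintegral_mul_rpow_lt_top (hp : 0 < p) (hq : 0 < q) (hpqr : 1 / p + 1 / q = 1 / r)
    (hF : AEMeasurable F μ) (hG : AEMeasurable G μ)
    (hFp : ∫⁻ a, F a ^ p ∂μ < ⊤) (hGq : ∫⁻ a, G a ^ q ∂μ < ⊤) :
    ∫⁻ a, (F a * G a) ^ r ∂μ < ⊤ := by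
  have hr : 0 < r := one_div_pos.mp (hpqr ▸ by positivity)
  have hrp : r < p := lt_of_one_div_lt_one_div hp (by linarith [one_div_pos.mpr hq])
  have holder := ENNReal.lintegral_Lp_mul_le_Lq_mul_Lr hr hrp hpqr.symm μ hF hG
  rw [← ENNReal.rpow_lt_top_iff_of_pos (one_div_pos.mpr hr)]
  refine holder.trans_lt (ENNReal.mul_lt_top ?_ ?_)
  · exact ENNReal.rpow_lt_top_of_nonneg (one_div_pos.mpr hp).le hFp.ne
  · exact ENNReal.rpow_lt_top_of_nonneg (one_div_pos.mpr hq).le hGq.ne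

theorem lintegral_rpow_lt_top_of_ae_le_const_mul {c : ℝ≥0∞} (hc : c ≠ ⊤) (hr : 0 ≤ r)
    (hH : ∀ᵐ a ∂μ, H a ≤ c * (F a * G a)) (hFG : ∫⁻ a, (F a * G a) ^ r ∂μ < ⊤) :
    ∫⁻ a, H a ^ r ∂μ < ⊤ :=
  calc ∫⁻ a, H a ^ r ∂μ
      ≤ ∫⁻ a, c ^ r * (F a * G a) ^ r ∂μ := lintegral_mono_ae <| hH.mono fun a ha => by
        rw [← ENNReal.mul_rpow_of_nonneg _ _ hr]
        exact ENNReal.rpow_le_rpow ha hr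
    _ = c ^ r * ∫⁻ a, (F a * G a) ^ r ∂μ :=
        lintegral_const_mul' _ _ (ENNReal.rpow_ne_top_of_nonneg hr hc)
    _ < ⊤ := ENNReal.mul_lt_top (ENNReal.rpow_lt_top_of_nonneg hr hc) hFG

end Holder

theorem ae_restrict_infDist_le_dist {X : Type*} [PseudoMetricSpace X] [MeasurableSpace X]
    [OpensMeasurableSpace X] (μ : Measure X) (s : Set X) (y : X) :
    ∀ᵐ x ∂μ.restrict s, infDist y s ≤ dist x y := by
  have hclosed : IsClosed {x | infDist y s ≤ dist x y} :=
    isClosed_le continuous_const (continuous_id.dist continuous_const)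
  exact ae_restrict_of_ae_restrict_of_subset
    (fun x hx => (infDist_le_dist_of_mem hx).trans_eq (dist_comm _ _))
    (ae_restrict_mem hclosed.measurableSet)

section Weighted

variable {E V : Type*} [NormedAddCommGroup E] [NormedAddCommGroup V]

noncomputable def weightedNorm (z₀ : E) (s : ℝ) (h : E → V) (z : E) : ℝ≥0∞ :=
  ENNReal.ofReal (‖z - z₀‖ ^ (1 - 2 / s) * ‖h z‖)

theorem measurable_weightedNorm [MeasurableSpace E] [OpensMeasurableSpace E] [MeasurableSpace V]
    [OpensMeasurableSpace V] (z₀ : E) (s : ℝ) {h : E → V} (hh : Measurable h) :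
    Measurable (weightedNorm z₀ s h) :=
  ENNReal.measurable_ofReal.comp
    (((continuous_norm.comp (continuous_sub_right z₀)).measurable.pow_const _).mul hh.norm)

theorem weightedNorm_rpow (z₀ : E) {s : ℝ} (hs : 0 < s) (h : E → V) (z : E) :
    weightedNorm z₀ s h z ^ s = ENNReal.ofReal (‖z - z₀‖ ^ (s - 2) * ‖h z‖ ^ s) := by
  rw [weightedNorm, ENNReal.ofReal_rpow_of_nonneg (by positivity) hs.le,
    Real.mul_rpow (by positivity) (by positivity), ← Real.rpow_mul (norm_nonneg _)]
  congr 3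
  field_simp

theorem weightedNorm_le_mul {W : Type*} [NormedAddCommGroup W] {p q r M : ℝ}
    (hpqr : 1 / p + 1 / q = 1 / r) {z₀ z : E} (hz : 0 < ‖z - z₀‖) (hM : 0 ≤ M)
    {h : E → V} {f g : E → W} (hfg : ‖h z‖ ≤ M * ‖z - z₀‖ * (‖f z‖ * ‖g z‖)) :
    weightedNorm z₀ r h z ≤
      ENNReal.ofReal M * (weightedNorm z₀ p f z * weightedNorm z₀ q g z) := by
  have hexp : ‖z - z₀‖ ^ (1 - 2 / r) * ‖z - z₀‖ =
      ‖z - z₀‖ ^ (1 - 2 / p) * ‖z - z₀‖ ^ (1 - 2 / q) := by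
    rw [← Real.rpow_add_one hz.ne', ← Real.rpow_add hz]
    congr 1
    linear_combination 2 * hpqr
  rw [weightedNorm, weightedNorm, weightedNorm, ← ENNReal.ofReal_mul (by positivity),
    ← ENNReal.ofReal_mul hM]
  refine ENNReal.ofReal_le_ofReal ?_
  calc ‖z - z₀‖ ^ (1 - 2 / r) * ‖h z‖
      ≤ ‖z - z₀‖ ^ (1 - 2 / r) * (M * ‖z - z₀‖ * (‖f z‖ * ‖g z‖)) := by gcongr
    _ = M * (‖z - z₀‖ ^ (1 - 2 / p) * ‖f z‖ * (‖z - z₀‖ ^ (1 - 2 / q) * ‖g z‖)) := by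
        linear_combination (M * (‖f z‖ * ‖g z‖)) * hexp

end Weighted

theorem norm_le_mul_norm_sub_of_le {E : Type*} [SeminormedAddCommGroup E] {z z₀ : E} {d : ℝ}
    (hd : 0 < d) (hz : d ≤ ‖z - z₀‖) : ‖z‖ ≤ (1 + ‖z₀‖ / d) * ‖z - z₀‖ := by
  have h₀ : ‖z₀‖ ≤ ‖z₀‖ / d * ‖z - z₀‖ := by
    rw [div_mul_eq_mul_div, le_div_iff₀ hd]
    exact mul_le_mul_of_nonneg_left hz (norm_nonneg _)
  calc ‖z‖ ≤ ‖z - z₀‖ + ‖z₀‖ := norm_le_norm_sub_add z z₀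
    _ ≤ (1 + ‖z₀‖ / d) * ‖z - z₀‖ := by linarith

theorem statement14_general (p q r : ℝ) (hp : 1 ≤ p) (hq : 1 ≤ q)
    (hpqr : 1 / p + 1 / q = 1 / r)
    (Γ : Set ℂ)
    (z₀ : ℂ) (hz₀ : 0 < Metric.infDist z₀ Γ)
    (f g : ℂ → ℂ) (hf_meas : Measurable f) (hg_meas : Measurable g)
    (hf : ∫⁻ z in Γ,
        ENNReal.ofReal (‖z - z₀‖ ^ (p - 2) * ‖f z‖ ^ p)
          ∂(μH[1] : Measure ℂ) < ⊤)
    (hg : ∫⁻ z in Γ,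
        ENNReal.ofReal (‖z - z₀‖ ^ (q - 2) * ‖g z‖ ^ q)
          ∂(μH[1] : Measure ℂ) < ⊤) :
    (∫⁻ z in Γ,
        ENNReal.ofReal (‖z - z₀‖ ^ (r - 2) * ‖z * f z * g z‖ ^ r)
          ∂(μH[1] : Measure ℂ) < ⊤) ∧
      (∫⁻ z in Γ,
        ENNReal.ofReal (‖z - z₀‖ ^ (r - 2) * ‖f z * g z‖ ^ r)
          ∂(μH[1] : Measure ℂ) < ⊤) := by
  have hp0 : 0 < p := by linarith
  have hq0 : 0 < q := by linarith
  have hr0 : 0 < r := one_div_pos.mp (hpqr ▸ by positivity)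
  have hFG : ∫⁻ z in Γ, (weightedNorm z₀ p f z * weightedNorm z₀ q g z) ^ r ∂μH[1] < ⊤ :=
    lintegral_mul_rpow_lt_top hp0 hq0 hpqr (measurable_weightedNorm z₀ p hf_meas).aemeasurable
      (measurable_weightedNorm z₀ q hg_meas).aemeasurable
      (by simpa only [weightedNorm_rpow z₀ hp0] using hf)
      (by simpa only [weightedNorm_rpow z₀ hq0] using hg)
  have weighted_lt_top : ∀ (h : ℂ → ℂ) (M : ℝ), 0 ≤ M →
      (∀ z, infDist z₀ Γ ≤ ‖z - z₀‖ → ‖h z‖ ≤ M * ‖z - z₀‖ * (‖f z‖ * ‖g z‖)) →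
      ∫⁻ z in Γ, ENNReal.ofReal (‖z - z₀‖ ^ (r - 2) * ‖h z‖ ^ r) ∂μH[1] < ⊤ := by
    intro h M hM hh
    simp only [← weightedNorm_rpow z₀ hr0]
    refine lintegral_rpow_lt_top_of_ae_le_const_mul (ENNReal.ofReal_ne_top (r := M)) hr0.le ?_
      hFG
    filter_upwards [ae_restrict_infDist_le_dist (μH[1] : Measure ℂ) Γ z₀] with z hz
    rw [dist_eq_norm] at hz
    exact weightedNorm_le_mul hpqr (hz₀.trans_le hz) hM (hh z hz)
  refine ⟨weighted_lt_top (fun z => z * f z * g z) (1 + ‖z₀‖ / infDist z₀ Γ) (by positivity) fun z hz => ?_,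
    weighted_lt_top (fun z => f z * g z) _ (inv_nonneg.mpr hz₀.le) fun z hz => ?_⟩
  · rw [norm_mul, norm_mul, mul_assoc]
    gcongr
    exact norm_le_mul_norm_sub_of_le hz₀ hz
  · rw [norm_mul, inv_mul_eq_div]
    exact le_mul_of_one_le_left (by positivity) ((one_le_div hz₀).mpr hz)

/-- Let `p, q, r ∈ [1,∞)` with `1/p + 1/q = 1/r`, let `Γ ⊆ ℂ` be
Carleson with constant `C`, and `z₀ ∈ ℂ` with `dist(z₀, Γ) > 0`. If
`f ∈ L̇^p(Γ)` and `g ∈ L̇^q(Γ)`, then both `z·f(z)·g(z)` and `f·g` belong to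
`L̇^r(Γ)`. -/
theorem statement14 (p q r : ℝ) (hp : 1 ≤ p) (hq : 1 ≤ q) (hr : 1 ≤ r)
    (hpqr : 1 / p + 1 / q = 1 / r)
    (Γ : Set ℂ) (C : ℝ) (hC : 0 < C)
    (hCar : ∀ (z : ℂ) (ρ : ℝ), 0 < ρ →
      μH[1] (Γ ∩ ball z ρ) ≤ ENNReal.ofReal (C * ρ))
    (z₀ : ℂ) (hz₀ : 0 < Metric.infDist z₀ Γ)
    (f g : ℂ → ℂ) (hf_meas : Measurable f) (hg_meas : Measurable g)
    (hf : ∫⁻ z in Γ,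
        ENNReal.ofReal (‖z - z₀‖ ^ (p - 2) * ‖f z‖ ^ p)
          ∂(μH[1] : Measure ℂ) < ⊤)
    (hg : ∫⁻ z in Γ,
        ENNReal.ofReal (‖z - z₀‖ ^ (q - 2) * ‖g z‖ ^ q)
          ∂(μH[1] : Measure ℂ) < ⊤) :
    (∫⁻ z in Γ,
        ENNReal.ofReal (‖z - z₀‖ ^ (r - 2) * ‖z * f z * g z‖ ^ r)
          ∂(μH[1] : Measure ℂ) < ⊤) ∧
      (∫⁻ z in Γ,
        ENNReal.ofReal (‖z - z₀‖ ^ (r - 2) * ‖f z * g z‖ ^ r)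
          ∂(μH[1] : Measure ℂ) < ⊤) :=
  statement14_general p q r hp hq hpqr Γ z₀ hz₀ f g hf_meas hg_meas hf hg
end

section
/- Let 1 ≤ p < ∞, let Γ ⊆ ℂ be a Borel set, let z₀ ∈ ℂ \ Γ, and let φ(z) = 1/(z − z₀), a bijection of ℂ \ {z₀} onto ℂ \ {0} with inverse φ⁻¹(w) = z₀ + 1/w. Then for every measurable h : ℂ → ℂ, ∫_Γ |z − z₀|^{p−2} |h(z)|^p dμ(z) = ∫_{φ(Γ)} |w^{−1} · h(φ⁻¹(w))|^p dμ(w), where φ(Γ) = {1/(z − z₀) : z ∈ Γ}. In particular, the map (Φh)(w) = w^{−1} h(φ⁻¹(w)) carries L̇^p(Γ) isometrically onto L^p(φ(Γ), μ). -/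
/-!
The map `φ z = (z - z₀)⁻¹` stretches lengths near `z` by the factor `‖z - z₀‖⁻²`: on a set
where `‖z - z₀‖⁻²` lies in `[a, b]`, `φ` is `b`-Lipschitz and `φ⁻¹` is `a⁻¹`-Lipschitz, so
`a μ(B) ≤ μ(φ B) ≤ b μ(B)` for the one-dimensional Hausdorff measure `μ`. Cutting a set into the
level sets `{q ^ k ≤ ‖z - z₀‖⁻² < q ^ (k + 1)}` and letting `q → 1` gives
`μ(φ B) = ∫_B ‖z - z₀‖⁻² dμ`, so the identity is the change of variables `w = φ z`, using
`‖z - z₀‖ ^ (p - 2) ‖h z‖ ^ p = ‖z - z₀‖⁻² ‖(z - z₀) h z‖ ^ p`.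
-/

open MeasureTheory Metric
open Set
open scoped NNReal ENNReal

theorem ENNReal.le_of_forall_one_lt_le_coe_mul {x y : ℝ≥0∞}
    (h : ∀ q : ℝ≥0, 1 < q → x ≤ q * y) : x ≤ y := by
  refine ENNReal.le_of_forall_lt_one_mul_le fun a ha => ?_
  rcases eq_or_ne a 0 with rfl | ha0
  · simp
  lift a to ℝ≥0 using ha.ne_top
  have ha0' : a ≠ 0 := by exact_mod_cast ha0
  have hq : 1 < a⁻¹ := (one_lt_inv₀ (pos_iff_ne_zero.2 ha0')).2 (by exact_mod_cast ha)
  calc (a : ℝ≥0∞) * x ≤ a * (↑a⁻¹ * y) := mul_le_mul_right (h a⁻¹ hq) _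
    _ = y := by rw [← mul_assoc, ← ENNReal.coe_mul, mul_inv_cancel₀ ha0', ENNReal.coe_one, one_mul]

namespace MeasureTheory

variable {α : Type*} [MeasurableSpace α] {μ ν ν' : Measure α} {f : α → ℝ≥0} {A : Set α}
  {q : ℝ≥0}

theorem measure_eq_tsum_inter_preimage_Ico_zpow (ν : Measure α) (hA : MeasurableSet A)
    (hf : Measurable f) (hpos : ∀ x ∈ A, f x ≠ 0) (hq : 1 < q) :
    ν A = ∑' k : ℤ, ν (A ∩ f ⁻¹' Ico (q ^ k) (q ^ (k + 1))) := by
  have hcover : ⋃ k : ℤ, A ∩ f ⁻¹' Ico (q ^ k) (q ^ (k + 1)) = A := by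
    refine (iUnion_subset fun k => inter_subset_left).antisymm fun x hx => ?_
    obtain ⟨k, hk⟩ := NNReal.exists_mem_Ico_zpow (hpos x hx) hq
    exact mem_iUnion.2 ⟨k, hx, hk⟩
  conv_lhs => rw [← hcover]
  refine measure_iUnion (fun k l hkl => ?_) fun k => hA.inter (hf measurableSet_Ico)
  refine disjoint_left.2 fun x hk hl => hkl ?_
  have hkl' : k < l + 1 := (zpow_lt_zpow_iff_right₀ hq).1 (hk.2.1.trans_lt hl.2.2)
  have hlk : l < k + 1 := (zpow_lt_zpow_iff_right₀ hq).1 (hl.2.1.trans_lt hk.2.2)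
  omega

theorem measure_le_coe_mul_of_density_bounds (hA : MeasurableSet A) (hf : Measurable f)
    (hpos : ∀ x ∈ A, f x ≠ 0)
    (hle : ∀ B ⊆ A, MeasurableSet B → ∀ b : ℝ≥0, (∀ x ∈ B, f x ≤ b) → ν B ≤ b * μ B)
    (hge : ∀ B ⊆ A, MeasurableSet B → ∀ a : ℝ≥0, (∀ x ∈ B, a ≤ f x) → a * μ B ≤ ν' B)
    (hq : 1 < q) : ν A ≤ q * ν' A := by
  rw [measure_eq_tsum_inter_preimage_Ico_zpow ν hA hf hpos hq,
    measure_eq_tsum_inter_preimage_Ico_zpow ν' hA hf hpos hq, ← ENNReal.tsum_mul_left]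
  refine ENNReal.tsum_le_tsum fun k => ?_
  have hB : MeasurableSet (A ∩ f ⁻¹' Ico (q ^ k) (q ^ (k + 1))) := hA.inter (hf measurableSet_Ico)
  calc ν (A ∩ f ⁻¹' Ico (q ^ k) (q ^ (k + 1)))
      ≤ ↑(q ^ (k + 1)) * μ (A ∩ f ⁻¹' Ico (q ^ k) (q ^ (k + 1))) :=
        hle _ inter_subset_left hB _ fun x hx => hx.2.2.le
    _ = q * (↑(q ^ k) * μ (A ∩ f ⁻¹' Ico (q ^ k) (q ^ (k + 1)))) := by
        rw [zpow_add_one₀ (by positivity), mul_comm _ q, ENNReal.coe_mul, mul_assoc]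
    _ ≤ q * ν' (A ∩ f ⁻¹' Ico (q ^ k) (q ^ (k + 1))) := by
        gcongr
        exact hge _ inter_subset_left hB _ fun x hx => hx.2.1

theorem measure_eq_setLIntegral_of_density_bounds (hA : MeasurableSet A) (hf : Measurable f)
    (hpos : ∀ x ∈ A, f x ≠ 0)
    (hle : ∀ B ⊆ A, MeasurableSet B → ∀ b : ℝ≥0, (∀ x ∈ B, f x ≤ b) → ν B ≤ b * μ B)
    (hge : ∀ B ⊆ A, MeasurableSet B → ∀ a : ℝ≥0, (∀ x ∈ B, a ≤ f x) → a * μ B ≤ ν B) :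
    ν A = ∫⁻ x in A, f x ∂μ := by
  have hle' : ∀ B ⊆ A, MeasurableSet B → ∀ b : ℝ≥0, (∀ x ∈ B, f x ≤ b) →
      μ.withDensity (fun x => f x) B ≤ b * μ B := fun B _ hB b hb => by
    rw [withDensity_apply _ hB, ← setLIntegral_const]
    exact setLIntegral_mono measurable_const fun x hx => by exact_mod_cast hb x hx
  have hge' : ∀ B ⊆ A, MeasurableSet B → ∀ a : ℝ≥0, (∀ x ∈ B, a ≤ f x) →
      a * μ B ≤ μ.withDensity (fun x => f x) B := fun B _ hB a ha => by
    rw [withDensity_apply _ hB, ← setLIntegral_const]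
    exact setLIntegral_mono hf.coe_nnreal_ennreal fun x hx => by exact_mod_cast ha x hx
  rw [← withDensity_apply _ hA]
  exact le_antisymm
    (ENNReal.le_of_forall_one_lt_le_coe_mul fun q hq =>
      measure_le_coe_mul_of_density_bounds hA hf hpos hle hge' hq)
    (ENNReal.le_of_forall_one_lt_le_coe_mul fun q hq =>
      measure_le_coe_mul_of_density_bounds hA hf hpos hle' hge hq)

end MeasureTheory

theorem MeasurableEmbedding.setLIntegral_image_eq_setLIntegral_mul {α β : Type*}
    [MeasurableSpace α] [MeasurableSpace β] {μ : Measure α} {ν : Measure β} {f : α → ℝ≥0}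
    {g : α → β} (hg : MeasurableEmbedding g) {s : Set α} (hs : MeasurableSet s)
    (hf : Measurable f) (hν : ∀ t ⊆ s, MeasurableSet t → ν (g '' t) = ∫⁻ x in t, f x ∂μ)
    (F : β → ℝ≥0∞) : ∫⁻ y in g '' s, F y ∂ν = ∫⁻ x in s, f x * F (g x) ∂μ := by
  have hmap : Measure.map g ((μ.restrict s).withDensity fun x => f x) = ν.restrict (g '' s) := by
    ext t ht
    rw [Measure.map_apply hg.measurable ht, withDensity_apply _ (hg.measurable ht),
      Measure.restrict_restrict (hg.measurable ht), Measure.restrict_apply ht,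
      ← image_preimage_inter, hν _ inter_subset_right ((hg.measurable ht).inter hs)]
  rw [← hmap, hg.lintegral_map, lintegral_withDensity_eq_lintegral_mul_non_measurable _
    hf.coe_nnreal_ennreal (ae_of_all _ fun _ => ENNReal.coe_lt_top)]
  rfl

theorem lipschitzOnWith_inv_sub {𝕜 : Type*} [NormedDivisionRing 𝕜] {c : 𝕜} {s : Set 𝕜} {r : ℝ≥0}
    (hc : c ∉ s) (hr : ∀ x ∈ s, ‖x - c‖₊⁻¹ ≤ r) :
    LipschitzOnWith (r ^ 2) (fun z => (z - c)⁻¹) s := by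
  refine LipschitzOnWith.of_dist_le_mul fun x hx y hy => ?_
  have hx0 : x - c ≠ 0 := sub_ne_zero.2 (ne_of_mem_of_not_mem hx hc)
  have hy0 : y - c ≠ 0 := sub_ne_zero.2 (ne_of_mem_of_not_mem hy hc)
  have hxr : ‖x - c‖⁻¹ ≤ r := by exact_mod_cast hr x hx
  have hyr : ‖y - c‖⁻¹ ≤ r := by exact_mod_cast hr y hy
  rw [dist_eq_norm, dist_eq_norm, inv_sub_inv' hx0 hy0, sub_sub_sub_cancel_right, norm_mul,
    norm_mul, norm_inv, norm_inv, norm_sub_rev y x, NNReal.coe_pow]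
  calc ‖x - c‖⁻¹ * ‖x - y‖ * ‖y - c‖⁻¹ = ‖x - c‖⁻¹ * ‖y - c‖⁻¹ * ‖x - y‖ := by ring
    _ ≤ r * r * ‖x - y‖ := by gcongr
    _ = r ^ 2 * ‖x - y‖ := by ring

section InvSub

variable {𝕜 : Type*} [NormedField 𝕜] [MeasurableSpace 𝕜] [BorelSpace 𝕜]

-- Since `0⁻¹ = 0`, the junk values `c ↦ 0 ↦ c` make this a bijection of all of `𝕜`.
theorem measurableEmbedding_inv_sub (c : 𝕜) : MeasurableEmbedding fun z : 𝕜 => (z - c)⁻¹ :=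
  MeasurableEquiv.measurableEmbedding
    { toFun := fun z => (z - c)⁻¹
      invFun := fun w => c + w⁻¹
      left_inv := fun z => by simp
      right_inv := fun w => by simp
      measurable_toFun := (measurable_id.sub_const c).inv
      measurable_invFun := measurable_inv.const_add c }

theorem hausdorffMeasure_image_inv_sub_le {c : 𝕜} {B : Set 𝕜} {b : ℝ≥0} (hc : c ∉ B)
    (hb : ∀ x ∈ B, ‖x - c‖₊⁻¹ ^ 2 ≤ b) : μH[1] ((fun z => (z - c)⁻¹) '' B) ≤ b * μH[1] B := by
  have hlip := lipschitzOnWith_inv_sub hc fun x hx => NNReal.le_sqrt_iff_sq_le.2 (hb x hx)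
  simpa using hlip.hausdorffMeasure_image_le zero_le_one

theorem mul_hausdorffMeasure_le_image_inv_sub {c : 𝕜} {B : Set 𝕜} {a : ℝ≥0} (hc : c ∉ B)
    (ha : ∀ x ∈ B, a ≤ ‖x - c‖₊⁻¹ ^ 2) : a * μH[1] B ≤ μH[1] ((fun z => (z - c)⁻¹) '' B) := by
  rcases eq_or_ne a 0 with rfl | ha0
  · simp
  have hsqrt : 0 < NNReal.sqrt a := NNReal.sqrt_pos.2 (pos_iff_ne_zero.2 ha0)
  have h0 : (0 : 𝕜) ∉ (fun z => (z - c)⁻¹) '' B := by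
    rintro ⟨x, hx, hx0⟩
    exact ne_of_mem_of_not_mem hx hc (sub_eq_zero.1 (inv_eq_zero.1 hx0))
  have hbound : ∀ w ∈ (fun z => (z - c)⁻¹) '' B, ‖w - 0‖₊⁻¹ ≤ (NNReal.sqrt a)⁻¹ := by
    rintro _ ⟨x, hx, rfl⟩
    have hx0 : 0 < ‖x - c‖₊ := nnnorm_pos.2 (sub_ne_zero.2 (ne_of_mem_of_not_mem hx hc))
    rw [sub_zero, nnnorm_inv, inv_inv, le_inv_comm₀ hx0 hsqrt]
    exact NNReal.sqrt_le_iff_le_sq.2 (ha x hx)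
  have himage :
      (fun w => (w - 0)⁻¹) '' ((fun z => (z - c)⁻¹) '' B) = IsometryEquiv.subRight c '' B := by
    rw [image_image]; simp
  have hinv := (lipschitzOnWith_inv_sub h0 hbound).hausdorffMeasure_image_le zero_le_one
  rw [himage, IsometryEquiv.hausdorffMeasure_image, inv_pow, NNReal.sq_sqrt,
    ENNReal.rpow_one] at hinv
  calc (a : ℝ≥0∞) * μH[1] B ≤ a * (↑a⁻¹ * μH[1] ((fun z => (z - c)⁻¹) '' B)) := by gcongr
    _ = μH[1] ((fun z => (z - c)⁻¹) '' B) := by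
      rw [← mul_assoc, ← ENNReal.coe_mul, mul_inv_cancel₀ ha0, ENNReal.coe_one, one_mul]

theorem hausdorffMeasure_image_inv_sub {c : 𝕜} {A : Set 𝕜} (hA : MeasurableSet A) (hc : c ∉ A) :
    μH[1] ((fun z => (z - c)⁻¹) '' A) = ∫⁻ z in A, ↑(‖z - c‖₊⁻¹ ^ 2) ∂μH[1] := by
  rw [← (measurableEmbedding_inv_sub c).comap_apply]
  refine measure_eq_setLIntegral_of_density_bounds hA (by fun_prop) (fun x hx => ?_)
    (fun B hBA _ b hb => ?_) fun B hBA _ a ha => ?_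
  · exact pow_ne_zero _ <| inv_ne_zero <| nnnorm_ne_zero_iff.2 <|
      sub_ne_zero.2 (ne_of_mem_of_not_mem hx hc)
  · rw [(measurableEmbedding_inv_sub c).comap_apply]
    exact hausdorffMeasure_image_inv_sub_le (fun h => hc (hBA h)) hb
  · rw [(measurableEmbedding_inv_sub c).comap_apply]
    exact mul_hausdorffMeasure_le_image_inv_sub (fun h => hc (hBA h)) ha

end InvSub

theorem ofReal_norm_rpow_sub_two_mul {𝕜 : Type*} [NormedDivisionRing 𝕜] {a : 𝕜} (ha : a ≠ 0)
    (w : 𝕜) (p : ℝ) :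
    ENNReal.ofReal (‖a‖ ^ (p - 2) * ‖w‖ ^ p) = ↑(‖a‖₊⁻¹ ^ 2) * ENNReal.ofReal (‖a * w‖ ^ p) := by
  have ha' : 0 < ‖a‖ := norm_pos_iff.2 ha
  rw [← ENNReal.ofReal_coe_nnreal, ← ENNReal.ofReal_mul (by positivity), norm_mul,
    Real.mul_rpow ha'.le (norm_nonneg w), Real.rpow_sub ha', Real.rpow_two]
  push_cast
  field_simp

theorem statement15_general (p : ℝ) (Γ : Set ℂ) (hΓ : MeasurableSet Γ)
    (z₀ : ℂ) (hz₀ : z₀ ∉ Γ) (h : ℂ → ℂ) :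
    ∫⁻ z in Γ,
        ENNReal.ofReal (‖z - z₀‖ ^ (p - 2) * ‖h z‖ ^ p)
          ∂(μH[1] : Measure ℂ)
      = ∫⁻ w in (fun z : ℂ => (z - z₀)⁻¹) '' Γ,
          ENNReal.ofReal (‖w⁻¹ * h (z₀ + w⁻¹)‖ ^ p)
            ∂(μH[1] : Measure ℂ) := by
  rw [(measurableEmbedding_inv_sub z₀).setLIntegral_image_eq_setLIntegral_mul hΓ (by fun_prop)
    fun t htΓ ht => hausdorffMeasure_image_inv_sub ht fun hz => hz₀ (htΓ hz)]
  refine setLIntegral_congr_fun hΓ fun z hz => ?_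
  simp only [inv_inv, add_sub_cancel]
  exact ofReal_norm_rpow_sub_two_mul (sub_ne_zero.2 (ne_of_mem_of_not_mem hz hz₀)) (h z) p

/-- Let `1 ≤ p < ∞`, `Γ ⊆ ℂ` Borel, `z₀ ∉ Γ`, and
`φ(z) = 1/(z - z₀)` with inverse `φ⁻¹(w) = z₀ + 1/w`. Then for every measurable
`h : ℂ → ℂ`,
`∫_Γ |z - z₀|^{p-2}|h(z)|^p dμ(z) = ∫_{φ(Γ)} |w⁻¹·h(φ⁻¹(w))|^p dμ(w)`;
i.e. `(Φh)(w) = w⁻¹ h(φ⁻¹(w))` carries `L̇^p(Γ)` isometrically onto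
`L^p(φ(Γ), μ)`. -/
theorem statement15 (p : ℝ) (hp : 1 ≤ p) (Γ : Set ℂ) (hΓ : MeasurableSet Γ)
    (z₀ : ℂ) (hz₀ : z₀ ∉ Γ) (h : ℂ → ℂ) (hmeas : Measurable h) :
    ∫⁻ z in Γ,
        ENNReal.ofReal (‖z - z₀‖ ^ (p - 2) * ‖h z‖ ^ p)
          ∂(μH[1] : Measure ℂ)
      = ∫⁻ w in (fun z : ℂ => (z - z₀)⁻¹) '' Γ,
          ENNReal.ofReal (‖w⁻¹ * h (z₀ + w⁻¹)‖ ^ p)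
            ∂(μH[1] : Measure ℂ) :=
  statement15_general p Γ hΓ z₀ hz₀ h
end

section
/- Let Γ ⊆ ℂ and z ∈ ℂ. Suppose there exist s₀ > 0, ρ > 0, and γ : ℝ → ℂ such that: γ(0) = z; γ is injective on [−s₀, s₀]; γ is 1-Lipschitz on [−s₀, s₀] (i.e., |γ(s) − γ(t)| ≤ |s − t| for s, t ∈ [−s₀, s₀]); γ is differentiable at 0 with |γ'(0)| = 1; and Γ ∩ D(z, ρ) ⊆ γ([−s₀, s₀]). Let g : [0,∞) → [0,∞) be continuous and nondecreasing with g(0) = 0. Then lim_{ε → 0⁺} ∫_{Γ ∩ ( D̄(z, ε(1 + g(ε))) \ D(z, ε(1 − g(ε))) )} |z' − z|^{−1} dμ(z') = 0, where D̄(z,r) denotes the closed disk and D(z,r) the open disk of radius r centered at z. -/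
open MeasureTheory Metric Filter Topology Set

/-!
Near `z`, every point `w` of `Γ` is `γ s` for a parameter with `c * |s| ≤ ‖w - z‖ ≤ |s|`,
for any `c < 1`: the upper bound is the Lipschitz condition, the lower bound comes from
`‖γ' 0‖ = 1` once `s` is small, and `s` is small because `γ` is a homeomorphism of the compact
parameter interval onto its image. So the part of `Γ` in the annulus `a ≤ ‖w - z‖ ≤ b` is the
image of `{s | a ≤ |s| ≤ b / c}`, of length at most `2 (b / c - a)`, and the integral is at most
`2 (b / (c a) - 1)`. With `b / a → 1` this tends to `2 (1 / c - 1)`, which is small for `c`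
close to `1`.
-/

theorem HasDerivAt.eventually_mul_abs_sub_le_norm_sub {E : Type*} [NormedAddCommGroup E]
    [NormedSpace ℝ E] {f : ℝ → E} {v : E} {x c : ℝ} (hf : HasDerivAt f v x) (hc : c < ‖v‖) :
    ∀ᶠ s in 𝓝 x, c * |s - x| ≤ ‖f s - f x‖ := by
  filter_upwards [hf.isLittleO.def (sub_pos.2 hc)] with s hs
  have h := norm_sub_norm_le ((s - x) • v) (f s - f x)
  rw [norm_sub_rev ((s - x) • v), norm_smul, Real.norm_eq_abs] at h
  rw [Real.norm_eq_abs] at hs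
  nlinarith [abs_nonneg (s - x)]

theorem IsCompact.eventually_forall_apply_eq_imp_mem {X Y : Type*} [TopologicalSpace X]
    [TopologicalSpace Y] [T2Space Y] {γ : X → Y} {T U : Set X} {t₀ : X} (hT : IsCompact T)
    (hγ : ContinuousOn γ T) (hinj : InjOn γ T) (ht₀ : t₀ ∈ T) (hU : U ∈ 𝓝 t₀) :
    ∀ᶠ w in 𝓝 (γ t₀), ∀ s ∈ T, γ s = w → s ∈ U := by
  have hK : IsClosed (γ '' (T \ interior U)) :=
    ((hT.diff isOpen_interior).image_of_continuousOn (hγ.mono sdiff_subset)).isClosed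
  have ht₀K : γ t₀ ∉ γ '' (T \ interior U) := by
    rintro ⟨s, ⟨hsT, hsU⟩, hs⟩
    exact hsU (hinj hsT ht₀ hs ▸ mem_interior_iff_mem_nhds.2 hU)
  filter_upwards [hK.isOpen_compl.mem_nhds ht₀K] with w hw s hsT hs
  by_contra hsU
  exact hw ⟨s, ⟨hsT, fun h => hsU (interior_subset h)⟩, hs⟩

theorem setLIntegral_inv_norm_sub_le {E : Type*} [NormedAddCommGroup E] [MeasurableSpace E]
    [OpensMeasurableSpace E] (μ : Measure E) {s : Set E} {z : E} {a : ℝ}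
    (hs : ∀ w ∈ s, a ≤ ‖w - z‖) :
    ∫⁻ w in s, (ENNReal.ofReal ‖w - z‖)⁻¹ ∂μ ≤ (ENNReal.ofReal a)⁻¹ * μ s := by
  have hfar : MeasurableSet {w : E | a ≤ ‖w - z‖} :=
    (isClosed_le continuous_const (continuous_id.sub continuous_const).norm).measurableSet
  calc ∫⁻ w in s, (ENNReal.ofReal ‖w - z‖)⁻¹ ∂μ ≤ ∫⁻ _ in s, (ENNReal.ofReal a)⁻¹ ∂μ := by
        refine lintegral_mono_ae (ae_restrict_of_ae_restrict_of_subset hs ?_)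
        exact ae_restrict_of_forall_mem hfar fun w hw =>
          ENNReal.inv_le_inv.2 (ENNReal.ofReal_le_ofReal hw)
    _ = (ENNReal.ofReal a)⁻¹ * μ s := setLIntegral_const _ _

theorem Real.volume_preimage_abs_Icc_le (a b : ℝ) :
    volume (abs ⁻¹' Icc a b) ≤ ENNReal.ofReal (2 * (b - a)) := by
  have hsub : abs ⁻¹' Icc a b ⊆ Icc a b ∪ Icc (-b) (-a) := by
    rintro s ⟨has, hsb⟩
    rcases le_or_gt 0 s with hs | hs
    · rw [abs_of_nonneg hs] at has hsb; exact Or.inl ⟨has, hsb⟩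
    · rw [abs_of_neg hs] at has hsb; exact Or.inr ⟨by linarith, by linarith⟩
  calc volume (abs ⁻¹' Icc a b) ≤ volume (Icc a b) + volume (Icc (-b) (-a)) :=
        (measure_mono hsub).trans (measure_union_le _ _)
    _ = ENNReal.ofReal (2 * (b - a)) := by
        rw [Real.volume_Icc, Real.volume_Icc, sub_neg_eq_add, neg_add_eq_sub, ← two_mul,
          ENNReal.ofReal_mul zero_le_two, ENNReal.ofReal_ofNat]

section Arc

variable {E : Type*} [NormedAddCommGroup E] [NormedSpace ℝ E] {Γ : Set E} {z : E} {T : Set ℝ}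
  {γ : ℝ → E} {v : E} {ρ c : ℝ}

theorem eventually_mem_arc_imp_exists_param (hT : IsCompact T) (h0 : (0 : ℝ) ∈ T)
    (hγ0 : γ 0 = z) (hinj : InjOn γ T) (hlip : LipschitzOnWith 1 γ T) (hv : HasDerivAt γ v 0)
    (hc : c < ‖v‖) (hρ : 0 < ρ) (hloc : Γ ∩ ball z ρ ⊆ γ '' T) :
    ∀ᶠ w in 𝓝 z, w ∈ Γ → ∃ s ∈ T, γ s = w ∧ c * |s| ≤ ‖w - z‖ ∧ ‖w - z‖ ≤ |s| := by
  have hslope : ∀ᶠ s in 𝓝 (0 : ℝ), c * |s| ≤ ‖γ s - z‖ := by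
    simpa [hγ0] using hv.eventually_mul_abs_sub_le_norm_sub hc
  have hfiber := hT.eventually_forall_apply_eq_imp_mem hlip.continuousOn hinj h0 hslope
  rw [hγ0] at hfiber
  filter_upwards [hfiber, ball_mem_nhds z hρ] with w hw hwρ hwΓ
  obtain ⟨s, hsT, rfl⟩ := hloc ⟨hwΓ, hwρ⟩
  refine ⟨s, hsT, rfl, hw s hsT rfl, ?_⟩
  simpa [hγ0, dist_eq_norm] using hlip.dist_le_mul s hsT 0 h0

variable [MeasurableSpace E] [BorelSpace E]

theorem eventually_hausdorffMeasure_inter_annulus_le (hT : IsCompact T) (h0 : (0 : ℝ) ∈ T)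
    (hγ0 : γ 0 = z) (hinj : InjOn γ T) (hlip : LipschitzOnWith 1 γ T) (hv : HasDerivAt γ v 0)
    (hc0 : 0 < c) (hc : c < ‖v‖) (hρ : 0 < ρ) (hloc : Γ ∩ ball z ρ ⊆ γ '' T) :
    ∀ᶠ b in 𝓝 (0 : ℝ), ∀ a, μH[1] (Γ ∩ (closedBall z b \ ball z a)) ≤
      ENNReal.ofReal (2 * (b / c - a)) := by
  obtain ⟨η, hη, hparam⟩ := Metric.eventually_nhds_iff_ball.1
    (eventually_mem_arc_imp_exists_param hT h0 hγ0 hinj hlip hv hc hρ hloc)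
  filter_upwards [Iio_mem_nhds hη] with b hb a
  set S := T ∩ abs ⁻¹' Icc a (b / c)
  have hsub : Γ ∩ (closedBall z b \ ball z a) ⊆ γ '' S := by
    rintro w ⟨hwΓ, hwb, hwa⟩
    obtain ⟨s, hsT, rfl, hlow, hup⟩ := hparam w (closedBall_subset_ball hb hwb) hwΓ
    rw [mem_closedBall, dist_eq_norm] at hwb
    rw [mem_ball, dist_eq_norm, not_lt] at hwa
    exact ⟨s, ⟨hsT, hwa.trans hup, (le_div_iff₀ hc0).2 (by linarith)⟩, rfl⟩
  calc μH[1] (Γ ∩ (closedBall z b \ ball z a)) ≤ μH[1] (γ '' S) := measure_mono hsub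
    _ ≤ (1 : ENNReal) ^ (1 : ℝ) * μH[1] S :=
        (hlip.mono inter_subset_left).hausdorffMeasure_image_le zero_le_one
    _ = volume S := by rw [ENNReal.one_rpow, one_mul, hausdorffMeasure_real]
    _ ≤ ENNReal.ofReal (2 * (b / c - a)) :=
        (measure_mono inter_subset_right).trans (Real.volume_preimage_abs_Icc_le a _)

theorem tendsto_setLIntegral_inv_norm_sub_inter_annulus {ι : Type*} {l : Filter ι}
    {a b : ι → ℝ} (ha : Tendsto a l (𝓝[>] 0)) (hab : Tendsto (fun i => b i / a i) l (𝓝 1))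
    (hT : IsCompact T) (h0 : (0 : ℝ) ∈ T) (hγ0 : γ 0 = z) (hinj : InjOn γ T)
    (hlip : LipschitzOnWith 1 γ T) (hv : HasDerivAt γ v 0) (hv1 : ‖v‖ = 1) (hρ : 0 < ρ)
    (hloc : Γ ∩ ball z ρ ⊆ γ '' T) :
    Tendsto (fun i => ∫⁻ w in Γ ∩ (closedBall z (b i) \ ball z (a i)),
      (ENNReal.ofReal ‖w - z‖)⁻¹ ∂μH[1]) l (𝓝 0) := by
  rw [ENNReal.tendsto_nhds_zero]
  intro η hη
  have hbound : Tendsto (fun c : ℝ => ENNReal.ofReal (2 * (c⁻¹ - 1))) (𝓝 1) (𝓝 0) := by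
    simpa using ENNReal.tendsto_ofReal (((tendsto_inv₀ one_ne_zero).sub_const 1).const_mul 2)
  obtain ⟨c, hcη, hc0, hc1⟩ :=
    (((hbound.mono_left nhdsWithin_le_nhds).eventually (gt_mem_nhds hη)).and
      (Ioo_mem_nhdsLT zero_lt_one)).exists
  have hF : Tendsto (fun i => ENNReal.ofReal (2 * (c⁻¹ * (b i / a i) - 1))) l
      (𝓝 (ENNReal.ofReal (2 * (c⁻¹ - 1)))) := by
    simpa using ENNReal.tendsto_ofReal (((hab.const_mul c⁻¹).sub_const 1).const_mul 2)
  have hapos : ∀ᶠ i in l, 0 < a i := ha.eventually self_mem_nhdsWithin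
  have hb : Tendsto b l (𝓝 0) := by
    have := hab.mul (tendsto_nhds_of_tendsto_nhdsWithin ha)
    rw [one_mul] at this
    refine this.congr' ?_
    filter_upwards [hapos] with i hi using div_mul_cancel₀ _ hi.ne'
  filter_upwards [hF.eventually (gt_mem_nhds hcη), hapos,
    hb.eventually (eventually_hausdorffMeasure_inter_annulus_le hT h0 hγ0 hinj hlip hv hc0
      (hv1 ▸ hc1) hρ hloc)] with i hFi hai hμ
  calc ∫⁻ w in Γ ∩ (closedBall z (b i) \ ball z (a i)), (ENNReal.ofReal ‖w - z‖)⁻¹ ∂μH[1]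
      ≤ (ENNReal.ofReal (a i))⁻¹ * μH[1] (Γ ∩ (closedBall z (b i) \ ball z (a i))) :=
        setLIntegral_inv_norm_sub_le _ fun w hw => by
          simpa [dist_eq_norm] using hw.2.2
    _ ≤ (ENNReal.ofReal (a i))⁻¹ * ENNReal.ofReal (2 * (b i / c - a i)) := by gcongr; exact hμ _
    _ = ENNReal.ofReal (2 * (c⁻¹ * (b i / a i) - 1)) := by
        rw [← ENNReal.ofReal_inv_of_pos hai, ← ENNReal.ofReal_mul (inv_nonneg.2 hai.le)]
        congr 1
        field_simp
    _ ≤ η := hFi.le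

end Arc

theorem statement18_general (Γ : Set ℂ) (z : ℂ) (s₀ ρ : ℝ) (hs₀ : 0 < s₀) (hρ : 0 < ρ)
    (γ : ℝ → ℂ) (hγ0 : γ 0 = z)
    (hinj : Set.InjOn γ (Set.Icc (-s₀) s₀))
    (hlip : LipschitzOnWith 1 γ (Set.Icc (-s₀) s₀))
    (hderiv : ∃ v : ℂ, HasDerivAt γ v 0 ∧ ‖v‖ = 1)
    (hloc : Γ ∩ ball z ρ ⊆ γ '' Set.Icc (-s₀) s₀)
    (g : ℝ → ℝ) (hg_cont : ContinuousOn g (Set.Ici 0)) (hg0 : g 0 = 0) :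
    Tendsto
      (fun ε : ℝ =>
        ∫⁻ z' in Γ ∩ (closedBall z (ε * (1 + g ε)) \ ball z (ε * (1 - g ε))),
          (ENNReal.ofReal (‖z' - z‖))⁻¹ ∂(μH[1] : Measure ℂ))
      (nhdsWithin 0 (Set.Ioi 0)) (nhds 0) := by
  obtain ⟨v, hv, hv1⟩ := hderiv
  have hg : Tendsto g (𝓝[>] 0) (𝓝 0) := by
    have := (hg_cont 0 self_mem_Ici).tendsto.mono_left (nhdsWithin_mono _ Ioi_subset_Ici_self)
    rwa [hg0] at this
  have hinnerRadius : Tendsto (fun ε : ℝ => ε * (1 - g ε)) (𝓝[>] 0) (𝓝[>] 0) := by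
    refine tendsto_nhdsWithin_iff.2 ⟨?_, ?_⟩
    · simpa using (tendsto_nhdsWithin_of_tendsto_nhds tendsto_id).mul (hg.const_sub 1)
    · filter_upwards [self_mem_nhdsWithin, hg.eventually (gt_mem_nhds one_pos)] with ε hε hgε
      exact mul_pos hε (sub_pos.2 hgε)
  have hratio : Tendsto (fun ε : ℝ => ε * (1 + g ε) / (ε * (1 - g ε))) (𝓝[>] 0) (𝓝 1) := by
    have := (hg.const_add 1).div (hg.const_sub 1) (by norm_num)
    simp only [add_zero, sub_zero, div_one] at this
    refine this.congr' ?_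
    filter_upwards [self_mem_nhdsWithin] with ε hε using (mul_div_mul_left _ _ hε.ne').symm
  exact tendsto_setLIntegral_inv_norm_sub_inter_annulus hinnerRadius hratio isCompact_Icc
    ⟨neg_nonpos.2 hs₀.le, hs₀.le⟩ hγ0 hinj hlip hv hv1 hρ hloc

/-- Suppose `Γ ⊆ ℂ` coincides near `z` with an arc parametrized
by a 1-Lipschitz injective map `γ` with `γ(0) = z`, differentiable at `0` with
`|γ'(0)| = 1` (a two-sided tangent at `z`). Let `g : [0,∞) → [0,∞)` be
continuous, nondecreasing, with `g(0) = 0`. Then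
`∫_{Γ ∩ (D̄(z, ε(1+g(ε))) \ D(z, ε(1-g(ε))))} |z' - z|⁻¹ dμ(z') → 0` as
`ε → 0⁺`. -/
theorem statement18 (Γ : Set ℂ) (z : ℂ) (s₀ ρ : ℝ) (hs₀ : 0 < s₀) (hρ : 0 < ρ)
    (γ : ℝ → ℂ) (hγ0 : γ 0 = z)
    (hinj : Set.InjOn γ (Set.Icc (-s₀) s₀))
    (hlip : LipschitzOnWith 1 γ (Set.Icc (-s₀) s₀))
    (hderiv : ∃ v : ℂ, HasDerivAt γ v 0 ∧ ‖v‖ = 1)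
    (hloc : Γ ∩ ball z ρ ⊆ γ '' Set.Icc (-s₀) s₀)
    (g : ℝ → ℝ) (hg_cont : ContinuousOn g (Set.Ici 0))
    (hg_mono : MonotoneOn g (Set.Ici 0))
    (hg_nonneg : ∀ x ∈ Set.Ici (0 : ℝ), 0 ≤ g x) (hg0 : g 0 = 0) :
    Tendsto
      (fun ε : ℝ =>
        ∫⁻ z' in Γ ∩ (closedBall z (ε * (1 + g ε)) \ ball z (ε * (1 - g ε))),
          (ENNReal.ofReal (‖z' - z‖))⁻¹ ∂(μH[1] : Measure ℂ))
      (nhdsWithin 0 (Set.Ioi 0)) (nhds 0) :=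
  statement18_general Γ z s₀ ρ hs₀ hρ γ hγ0 hinj hlip hderiv hloc g hg_cont hg0
end
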